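/- arXiv:2210.15744 — 3 statements merged into one kernel-verified Lean document; each statement's English description precedes it below -/
import Mathlib

section
/- If 0 < γ < 3^{−1/q}, then any finitely many vectors x₁, …, xₙ in Ti(p,γ) with consecutive supports satisfy the upper p-estimate ‖∑ⱼ₌₁ⁿ xⱼ‖ ≤ 3^{1/q} (∑ⱼ₌₁ⁿ ‖xⱼ‖^p)^{1/p}. -/
/-!
Write `a = ∑ⱼ xⱼ` and test the norm of `a` against blocks `E₁ < ⋯ < Eₘ`. The vectors `xⱼ`
meeting a block `Eₖ` are its at most two end vectors, of which `Eₖ` sees a restriction, and its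
inner vectors, which lie between two points of `Eₖ` and hence meet no other block; by induction on
the set of indices, the inner vectors of `Eₖ` contribute at most `3^{1/q} (∑ ‖xⱼ‖^p)^{1/p}`, the
sum running over them. A vector `xⱼ` is an end vector of `cⱼ` blocks, where `∑ⱼ cⱼ ≤ 2m`, and the
norm inequality for those blocks gives `γ ∑ₖ ‖Eₖ xⱼ‖ ≤ cⱼ^{1/q} ‖xⱼ‖`. Hölder's inequality bounds
`γ ∑ₖ ‖Eₖ a‖` by `(2m + m (γ 3^{1/q})^q)^{1/q} (∑ⱼ ‖xⱼ‖^p)^{1/p}`, and `γ 3^{1/q} ≤ 1` turns the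
first factor into `(3m)^{1/q}`.
-/

open Finset

noncomputable section

/-- Coordinate restriction `E a` of a finitely supported sequence `a` to the finite set `E`. -/
def restr (E : Finset ℕ) (a : ℕ →₀ ℝ) : ℕ →₀ ℝ := a.filter (· ∈ E)

/-- `E₁ < E₂ < ⋯ < Eₙ`: a family of nonempty finite sets of naturals which are consecutive. -/
def Consec {n : ℕ} (E : Fin n → Finset ℕ) : Prop :=
  (∀ j, (E j).Nonempty) ∧ ∀ i j : Fin n, i < j → ∀ s ∈ E i, ∀ t ∈ E j, s < t

/-- The set of quantities `γ·(∑ⱼ N(Eⱼ a))/n^{1/q}` over all consecutive families `E₁ < ⋯ < Eₙ`. -/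
def tiSet (q γ : ℝ) (N : (ℕ →₀ ℝ) → ℝ) (a : ℕ →₀ ℝ) : Set ℝ :=
  {x | ∃ n : ℕ, 0 < n ∧ ∃ E : Fin n → Finset ℕ, Consec E ∧
    x = γ * (∑ j, N (restr (E j) a)) / (n : ℝ) ^ (1 / q)}

/-- `N` satisfies the implicit equation defining the norm of the Tirilman space `Ti(p,γ)`:
`‖a‖ = max {‖a‖_∞, γ·sup (∑ⱼ ‖Eⱼ a‖)/n^{1/q}}`. -/
def TiEq (q γ : ℝ) (N : (ℕ →₀ ℝ) → ℝ) : Prop :=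
  ∀ a : ℕ →₀ ℝ, N a = max (⨆ i, |a i|) (sSup (tiSet q γ N a))

/-- Finitely many finitely supported vectors have consecutive supports. -/
def ConsecSupp {n : ℕ} (x : Fin n → (ℕ →₀ ℝ)) : Prop :=
  ∀ i j : Fin n, i < j → ∀ s ∈ (x i).support, ∀ t ∈ (x j).support, s < t

/-- A sequence of finitely supported vectors with consecutive supports. -/
def ConsecSuppSeq (x : ℕ → (ℕ →₀ ℝ)) : Prop :=
  ∀ i j : ℕ, i < j → ∀ s ∈ (x i).support, ∀ t ∈ (x j).support, s < t

/-- The dual norm on `Ti^*(p,γ)` of the functional with coefficient vector `c`: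
the supremum of `∑ᵢ cᵢ aᵢ` over the unit ball of the Tirilman norm `N`. -/
def dualN (N : (ℕ →₀ ℝ) → ℝ) (c : ℕ →₀ ℝ) : ℝ :=
  sSup {x | ∃ a : ℕ →₀ ℝ, N a ≤ 1 ∧ x = ∑ i ∈ c.support, c i * a i}

lemma restr_apply (E : Finset ℕ) (a : ℕ →₀ ℝ) (i : ℕ) :
    restr E a i = if i ∈ E then a i else 0 :=
  Finsupp.filter_apply _ _ _

lemma restr_eq_zero_iff {E : Finset ℕ} {a : ℕ →₀ ℝ} : restr E a = 0 ↔ ∀ i ∈ E, a i = 0 :=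
  Finsupp.filter_eq_zero_iff _ _

lemma restr_eq_self {E : Finset ℕ} {a : ℕ →₀ ℝ} (h : a.support ⊆ E) : restr E a = a :=
  (Finsupp.filter_eq_self_iff _ _).2 fun _ hi => h (Finsupp.mem_support_iff.2 hi)

lemma restr_zero (E : Finset ℕ) : restr E 0 = 0 := Finsupp.filter_zero _

lemma restr_empty (a : ℕ →₀ ℝ) : restr ∅ a = 0 :=
  restr_eq_zero_iff.2 fun _ h => (Finset.notMem_empty _ h).elim

lemma restr_add (E : Finset ℕ) (a b : ℕ →₀ ℝ) : restr E (a + b) = restr E a + restr E b :=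
  Finsupp.filter_add

lemma restr_sum {ι : Type*} (E : Finset ℕ) (s : Finset ι) (x : ι → ℕ →₀ ℝ) :
    restr E (∑ j ∈ s, x j) = ∑ j ∈ s, restr E (x j) :=
  Finsupp.filter_sum _ _

lemma support_restr (E : Finset ℕ) (a : ℕ →₀ ℝ) : (restr E a).support = a.support ∩ E := by
  simp [restr, Finset.filter_mem_eq_inter]

lemma restr_restr (E F : Finset ℕ) (a : ℕ →₀ ℝ) : restr E (restr F a) = restr (E ∩ F) a := by
  ext i
  simp only [restr_apply, Finset.mem_inter]
  split_ifs <;> tauto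

lemma restr_inter_support (E : Finset ℕ) (a : ℕ →₀ ℝ) : restr (E ∩ a.support) a = restr E a := by
  ext i
  by_cases hi : a i = 0 <;> simp [restr_apply, hi]

lemma Consec.disjoint {n : ℕ} {E : Fin n → Finset ℕ} (hE : Consec E) {i j : Fin n} (hij : i ≠ j) :
    Disjoint (E i) (E j) := by
  rw [Finset.disjoint_left]
  intro s hsi hsj
  rcases hij.lt_or_gt with h | h
  · exact lt_irrefl s (hE.2 i j h s hsi s hsj)
  · exact lt_irrefl s (hE.2 j i h s hsj s hsi)

lemma consec_singleton (n : ℕ) : Consec fun j : Fin n => ({(j : ℕ)} : Finset ℕ) :=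
  ⟨fun _ => Finset.singleton_nonempty _, fun _ _ hij _ hs _ ht => by
    rw [Finset.mem_singleton] at hs ht
    exact hs ▸ ht ▸ hij⟩

lemma mem_tiSet_of_finset {ι : Type*} [LinearOrder ι] {q γ : ℝ} {N : (ℕ →₀ ℝ) → ℝ}
    (a : ℕ →₀ ℝ) {K : Finset ι} (hK : K.Nonempty) (G : ι → Finset ℕ)
    (hne : ∀ k ∈ K, (G k).Nonempty)
    (hG : ∀ k ∈ K, ∀ k' ∈ K, k < k' → ∀ s ∈ G k, ∀ t ∈ G k', s < t) :
    γ * (∑ k ∈ K, N (restr (G k) a)) / (K.card : ℝ) ^ (1 / q) ∈ tiSet q γ N a := by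
  set σ := K.orderIsoOfFin rfl
  refine ⟨K.card, hK.card_pos, fun i => G (σ i), ⟨fun i => hne _ (σ i).2, ?_⟩, ?_⟩
  · exact fun i j hij => hG _ (σ i).2 _ (σ j).2 (σ.strictMono hij)
  · rw [← Finset.sum_coe_sort K]
    congr 2
    exact (Fintype.sum_equiv σ.toEquiv _ _ fun _ => rfl).symm

namespace ConsecSupp

variable {n : ℕ} {x : Fin n → ℕ →₀ ℝ}

lemma map_restr (hx : ConsecSupp x) (G : Finset ℕ) : ConsecSupp fun j => restr G (x j) := by
  intro i j hij s hs t ht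
  rw [support_restr] at hs ht
  exact hx i j hij s (Finset.mem_inter.1 hs).1 t (Finset.mem_inter.1 ht).1

lemma sum_apply_eq (hx : ConsecSupp x) {s : Finset (Fin n)} {j : Fin n} (hj : j ∈ s) {i : ℕ}
    (hi : x j i ≠ 0) : (∑ j ∈ s, x j) i = x j i := by
  rw [Finsupp.finsetSum_apply]
  refine Finset.sum_eq_single_of_mem j hj fun j' _ hne => ?_
  by_contra h
  rcases hne.lt_or_gt with hlt | hlt
  · exact lt_irrefl i (hx j' j hlt i (Finsupp.mem_support_iff.2 h) i (Finsupp.mem_support_iff.2 hi))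
  · exact lt_irrefl i (hx j j' hlt i (Finsupp.mem_support_iff.2 hi) i (Finsupp.mem_support_iff.2 h))

end ConsecSupp

def meets {n : ℕ} (s : Finset (Fin n)) (x : Fin n → ℕ →₀ ℝ) (G : Finset ℕ) : Finset (Fin n) :=
  s.filter fun j => restr G (x j) ≠ 0

lemma meets_subset {n : ℕ} (s : Finset (Fin n)) (x : Fin n → ℕ →₀ ℝ) (G : Finset ℕ) :
    meets s x G ⊆ s :=
  Finset.filter_subset _ _

lemma le_of_mem_meets {n m : ℕ} {s : Finset (Fin n)} {x : Fin n → ℕ →₀ ℝ} (hx : ConsecSupp x)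
    {G : Fin m → Finset ℕ} (hG : Consec G) {k k' : Fin m} (hkk' : k < k') {j j' : Fin n}
    (hj : j ∈ meets s x (G k)) (hj' : j' ∈ meets s x (G k')) : j ≤ j' := by
  obtain ⟨i, hiG, hi⟩ : ∃ i ∈ G k, x j i ≠ 0 := by
    simpa [restr_eq_zero_iff] using (Finset.mem_filter.1 hj).2
  obtain ⟨i', hiG', hi'⟩ : ∃ i' ∈ G k', x j' i' ≠ 0 := by
    simpa [restr_eq_zero_iff] using (Finset.mem_filter.1 hj').2
  by_contra hlt
  exact (hG.2 k k' hkk' i hiG i' hiG').not_gt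
    (hx j' j (not_le.1 hlt) i' (Finsupp.mem_support_iff.2 hi') i (Finsupp.mem_support_iff.2 hi))

section InteriorPoints

variable {α : Type*} [LinearOrder α]

def interiorPoints (J : Finset α) : Finset α :=
  J.filter fun j => (∃ u ∈ J, u < j) ∧ ∃ w ∈ J, j < w

lemma interiorPoints_subset (J : Finset α) : interiorPoints J ⊆ J := Finset.filter_subset _ _

lemma interiorPoints_ssubset {J : Finset α} (hJ : J.Nonempty) : interiorPoints J ⊂ J := by
  refine (Finset.ssubset_iff_of_subset (interiorPoints_subset J)).2
    ⟨J.min' hJ, J.min'_mem hJ, fun hmin => ?_⟩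
  obtain ⟨-, ⟨u, hu, hlt⟩, -⟩ := Finset.mem_filter.1 hmin
  exact (J.min'_le u hu).not_gt hlt

lemma card_sdiff_interiorPoints_le_two (J : Finset α) : (J \ interiorPoints J).card ≤ 2 := by
  rcases J.eq_empty_or_nonempty with rfl | hJ
  · simp
  refine (Finset.card_le_card fun j hj => ?_).trans (Finset.card_le_two (a := J.min' hJ)
    (b := J.max' hJ))
  obtain ⟨hjJ, hj⟩ := Finset.mem_sdiff.1 hj
  rw [Finset.mem_insert, Finset.mem_singleton]
  by_contra hne
  push Not at hne
  exact hj (Finset.mem_filter.2 ⟨hjJ,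
    ⟨_, J.min'_mem hJ, (J.min'_le j hjJ).lt_of_ne' hne.1⟩,
    ⟨_, J.max'_mem hJ, (J.le_max' j hjJ).lt_of_ne hne.2⟩⟩)

lemma eq_of_mem_interiorPoints {ι : Type*} [LinearOrder ι] {J : ι → Finset α}
    (hJ : ∀ k k', k < k' → ∀ j ∈ J k, ∀ j' ∈ J k', j ≤ j') {k k' : ι} {j : α}
    (hj : j ∈ interiorPoints (J k)) (hj' : j ∈ J k') : k' = k := by
  obtain ⟨-, ⟨u, hu, huj⟩, ⟨w, hw, hjw⟩⟩ := Finset.mem_filter.1 hj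
  rcases lt_trichotomy k' k with h | h | h
  · exact absurd (hJ k' k h j hj' u hu) huj.not_ge
  · exact h
  · exact absurd (hJ k k' h w hw j hj') hjw.not_ge

lemma pairwise_disjoint_interiorPoints {ι : Type*} [LinearOrder ι] {J : ι → Finset α}
    (hJ : ∀ k k', k < k' → ∀ j ∈ J k, ∀ j' ∈ J k', j ≤ j') :
    Pairwise (Function.onFun Disjoint fun k => interiorPoints (J k)) :=
  fun _ _ hkk' => Finset.disjoint_left.2 fun _ hj hj' =>
    hkk' (eq_of_mem_interiorPoints hJ hj' (interiorPoints_subset _ hj))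

lemma notMem_sdiff_interiorPoints {ι : Type*} [LinearOrder ι] {J : ι → Finset α}
    (hJ : ∀ k k', k < k' → ∀ j ∈ J k, ∀ j' ∈ J k', j ≤ j') {k : ι} {j : α}
    (hj : j ∈ interiorPoints (J k)) (k' : ι) : j ∉ J k' \ interiorPoints (J k') := fun h =>
  (Finset.mem_sdiff.1 h).2 (eq_of_mem_interiorPoints hJ hj (Finset.mem_sdiff.1 h).1 ▸ hj)

lemma sum_card_filter_mem_sdiff_interiorPoints_le {ι : Type*} [Fintype ι] (s : Finset α)
    (J : ι → Finset α) :
    ∑ j ∈ s, (Finset.univ.filter fun k => j ∈ J k \ interiorPoints (J k)).card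
      ≤ 2 * Fintype.card ι := by
  rw [← Finset.card_univ, mul_comm, ← smul_eq_mul, ← Finset.sum_const]
  refine (Finset.sum_card_bipartiteAbove_eq_sum_card_bipartiteBelow
    (fun j k => j ∈ J k \ interiorPoints (J k))).trans_le (Finset.sum_le_sum fun k _ => ?_)
  exact (Finset.card_le_card fun j hj => (Finset.mem_filter.1 hj).2).trans
    (card_sdiff_interiorPoints_le_two (J k))

end InteriorPoints

lemma inner_add_inner_le_Lp_mul_Lq {ι κ : Type*} (s : Finset ι) (t : Finset κ) {p q : ℝ}
    (hpq : p.HolderConjugate q) {f g : ι → ℝ} {f' g' : κ → ℝ} (hf : ∀ i ∈ s, 0 ≤ f i)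
    (hg : ∀ i ∈ s, 0 ≤ g i) (hf' : ∀ k ∈ t, 0 ≤ f' k) (hg' : ∀ k ∈ t, 0 ≤ g' k) :
    ∑ i ∈ s, f i * g i + ∑ k ∈ t, f' k * g' k
      ≤ (∑ i ∈ s, f i ^ p + ∑ k ∈ t, f' k ^ p) ^ (1 / p)
        * (∑ i ∈ s, g i ^ q + ∑ k ∈ t, g' k ^ q) ^ (1 / q) := by
  have h := Real.inner_le_Lp_mul_Lq_of_nonneg (s.disjSum t) hpq
    (f := Sum.elim f f') (g := Sum.elim g g')
    (by simpa [Finset.mem_disjSum] using And.intro hf hf')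
    (by simpa [Finset.mem_disjSum] using And.intro hg hg')
  simpa only [Finset.sum_disjSum, Sum.elim_inl, Sum.elim_inr] using h

lemma sum_card_rpow_mul_add_sum_le {ι κ : Type*} [Fintype κ] [DecidableEq ι] {p q : ℝ}
    (hpq : p.HolderConjugate q) {s : Finset ι} {mid : κ → Finset ι} (hmid_s : ∀ k, mid k ⊆ s)
    (hmid : Pairwise (Function.onFun Disjoint mid)) {c : ι → ℕ} (hc0 : ∀ k, ∀ j ∈ mid k, c j = 0)
    (hc : ∑ j ∈ s, c j ≤ 2 * Fintype.card κ) {a : ι → ℝ} (ha : ∀ j, 0 ≤ a j) {β : ℝ}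
    (hβ : 0 ≤ β) (hβq : β ^ q ≤ 1) :
    ∑ j ∈ s, (c j : ℝ) ^ (1 / q) * a j + ∑ k, β * (∑ j ∈ mid k, a j ^ p) ^ (1 / p)
      ≤ (3 * Fintype.card κ : ℝ) ^ (1 / q) * (∑ j ∈ s, a j ^ p) ^ (1 / p) := by
  set D := Finset.univ.biUnion mid
  have hDs : D ⊆ s := Finset.biUnion_subset.2 fun k _ => hmid_s k
  have hq : 0 < q := hpq.symm.pos
  have hap : ∀ j, 0 ≤ a j ^ p := fun j => Real.rpow_nonneg (ha j) p
  have hinv : ∀ {r y : ℝ}, 0 ≤ y → r ≠ 0 → (y ^ (1 / r)) ^ r = y := fun hy hr => by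
    rw [one_div, Real.rpow_inv_rpow hy hr]
  have hcD : ∑ j ∈ s, (c j : ℝ) ^ (1 / q) * a j = ∑ j ∈ s \ D, (c j : ℝ) ^ (1 / q) * a j := by
    rw [← Finset.sum_sdiff hDs, Finset.sum_eq_zero (s := D) fun j hj => ?_, add_zero]
    obtain ⟨k, -, hjk⟩ := Finset.mem_biUnion.1 hj
    rw [hc0 k j hjk, Nat.cast_zero, Real.zero_rpow (one_div_pos.2 hq).ne', zero_mul]
  have hcount : ∑ j ∈ s \ D, (c j : ℝ) + ∑ _k : κ, β ^ q ≤ 3 * Fintype.card κ := by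
    have hsub : ∑ j ∈ s \ D, (c j : ℝ) ≤ ∑ j ∈ s, (c j : ℝ) :=
      Finset.sum_le_sum_of_subset_of_nonneg Finset.sdiff_subset fun _ _ _ => by positivity
    have hc' : ∑ j ∈ s, (c j : ℝ) ≤ 2 * Fintype.card κ := by exact_mod_cast hc
    rw [Finset.sum_const, Finset.card_univ, nsmul_eq_mul]
    nlinarith
  have hpsum : ∑ j ∈ s \ D, a j ^ p + ∑ k, ∑ j ∈ mid k, a j ^ p = ∑ j ∈ s, a j ^ p := by
    rw [← Finset.sum_biUnion (hmid.set_pairwise _), Finset.sum_sdiff hDs]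
  calc ∑ j ∈ s, (c j : ℝ) ^ (1 / q) * a j + ∑ k, β * (∑ j ∈ mid k, a j ^ p) ^ (1 / p)
      ≤ (∑ j ∈ s \ D, ((c j : ℝ) ^ (1 / q)) ^ q + ∑ _k : κ, β ^ q) ^ (1 / q)
        * (∑ j ∈ s \ D, a j ^ p + ∑ k, ((∑ j ∈ mid k, a j ^ p) ^ (1 / p)) ^ p) ^ (1 / p) := by
        rw [hcD]
        exact inner_add_inner_le_Lp_mul_Lq _ _ hpq.symm (fun _ _ => by positivity)
          (fun j _ => ha j) (fun _ _ => hβ)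
          (fun _ _ => Real.rpow_nonneg (Finset.sum_nonneg fun j _ => hap j) _)
    _ ≤ (3 * Fintype.card κ : ℝ) ^ (1 / q) * (∑ j ∈ s, a j ^ p) ^ (1 / p) := by
        rw [Finset.sum_congr rfl fun j _ => hinv (Nat.cast_nonneg _) hq.ne',
          Finset.sum_congr rfl fun k _ =>
            hinv (Finset.sum_nonneg fun j _ => hap j) hpq.ne_zero, hpsum]
        gcongr
        exact Real.rpow_nonneg (Finset.sum_nonneg fun j _ => hap j) _

section TiNorm

variable {p q γ : ℝ} {N : (ℕ →₀ ℝ) → ℝ}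

lemma abs_apply_le (hN : TiEq q γ N) (a : ℕ →₀ ℝ) (i : ℕ) : |a i| ≤ N a := by
  have hbdd : BddAbove (Set.range fun i => |a i|) :=
    Set.range_comp abs a ▸ (a.finite_range.image abs).bddAbove
  rw [hN a]
  exact le_max_of_le_left (le_ciSup hbdd i)

lemma N_nonneg (hN : TiEq q γ N) (a : ℕ →₀ ℝ) : 0 ≤ N a :=
  (abs_nonneg _).trans (abs_apply_le hN a 0)

/-- If `N 0 > 0`, the singleton blocks give the elements `γ n^{1 - 1/q} N 0` of `tiSet`, unbounded
in `n`; but then `sSup` takes its junk value `0`, and the equation forces `N 0 = 0`. -/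
lemma N_zero (hN : TiEq q γ N) (hγ : 0 < γ) (hq : 1 < q) : N 0 = 0 := by
  by_contra h
  have hpos : 0 < N 0 := (N_nonneg hN 0).lt_of_ne' h
  have hmem : ∀ n : ℕ, 0 < n → γ * N 0 * (n : ℝ) ^ (1 - 1 / q) ∈ tiSet q γ N 0 := by
    intro n hn
    refine ⟨n, hn, _, consec_singleton n, ?_⟩
    simp only [restr_zero, Finset.sum_const, Finset.card_univ, Fintype.card_fin, nsmul_eq_mul]
    rw [Real.rpow_sub (Nat.cast_pos.2 hn), Real.rpow_one]
    ring
  have hunbdd : ¬ BddAbove (tiSet q γ N 0) := by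
    rintro ⟨M, hM⟩
    have hexp : 0 < 1 - 1 / q := by
      rw [sub_pos, div_lt_one (by linarith)]
      exact hq
    have hlim : Filter.Tendsto (fun n : ℕ => γ * N 0 * (n : ℝ) ^ (1 - 1 / q))
        Filter.atTop Filter.atTop :=
      ((tendsto_rpow_atTop hexp).comp tendsto_natCast_atTop_atTop).const_mul_atTop
        (mul_pos hγ hpos)
    obtain ⟨n, hnM, hn⟩ :=
      ((hlim.eventually_gt_atTop M).and (Filter.eventually_gt_atTop 0)).exists
    exact (hM (hmem n hn)).not_gt hnM
  have h0 := hN 0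
  simp only [Real.sSup_of_not_bddAbove hunbdd, Finsupp.coe_zero, Pi.zero_apply, abs_zero,
    ciSup_const, max_self] at h0
  exact h h0

lemma tiSet_bddAbove (hN : TiEq q γ N) (hγ : 0 < γ) (hq : 1 < q) (a : ℕ →₀ ℝ) :
    BddAbove (tiSet q γ N a) := by
  refine ⟨γ * ∑ t ∈ a.support.powerset, N (restr t a), ?_⟩
  rintro v ⟨n, hn, E, hE, rfl⟩
  set K := Finset.univ.filter fun j => (E j ∩ a.support).Nonempty
  have hsum : ∑ j, N (restr (E j) a) = ∑ t ∈ K.image (E · ∩ a.support), N (restr t a) := by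
    rw [Finset.sum_image, ← Finset.sum_filter_of_ne (p := fun j => (E j ∩ a.support).Nonempty)]
    · simp only [restr_inter_support, K]
    · intro j _ hj
      by_contra hempty
      rw [Finset.not_nonempty_iff_eq_empty] at hempty
      rw [← restr_inter_support, hempty, restr_empty, N_zero hN hγ hq] at hj
      exact hj rfl
    · intro i _ j hj hij
      by_contra hne
      obtain ⟨u, hu⟩ := (Finset.mem_filter.1 hj).2
      have hu' : u ∈ E i ∩ a.support := by simpa only [hij] using hu
      exact Finset.disjoint_left.1 (hE.disjoint hne) (Finset.mem_inter.1 hu').1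
        (Finset.mem_inter.1 hu).1
  have hsub : K.image (E · ∩ a.support) ⊆ a.support.powerset := fun t ht => by
    obtain ⟨j, -, rfl⟩ := Finset.mem_image.1 ht
    exact Finset.mem_powerset.2 Finset.inter_subset_right
  have hn1 : 1 ≤ (n : ℝ) ^ (1 / q) :=
    Real.one_le_rpow (Nat.one_le_cast.2 hn) (by positivity)
  calc (γ * ∑ j, N (restr (E j) a)) / (n : ℝ) ^ (1 / q) ≤ γ * ∑ j, N (restr (E j) a) :=
        div_le_self (mul_nonneg hγ.le (Finset.sum_nonneg fun _ _ => N_nonneg hN _)) hn1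
    _ ≤ γ * ∑ t ∈ a.support.powerset, N (restr t a) := by
        rw [hsum]
        gcongr
        exact fun _ _ _ => N_nonneg hN _

lemma le_of_mem_tiSet (hN : TiEq q γ N) (hγ : 0 < γ) (hq : 1 < q) {a : ℕ →₀ ℝ} {v : ℝ}
    (hv : v ∈ tiSet q γ N a) : v ≤ N a :=
  (le_csSup (tiSet_bddAbove hN hγ hq a) hv).trans (hN a ▸ le_max_right _ _)

lemma sum_le_card_rpow_mul {ι : Type*} [LinearOrder ι] (hN : TiEq q γ N) (hγ : 0 < γ)
    (hq : 1 < q) (a : ℕ →₀ ℝ) (K : Finset ι) (G : ι → Finset ℕ)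
    (hG : ∀ k ∈ K, ∀ k' ∈ K, k < k' → ∀ s ∈ G k, ∀ t ∈ G k', s < t) :
    γ * ∑ k ∈ K, N (restr (G k) a) ≤ (K.card : ℝ) ^ (1 / q) * N a := by
  set K' := K.filter fun k => (G k).Nonempty
  have hsum : ∑ k ∈ K, N (restr (G k) a) = ∑ k ∈ K', N (restr (G k) a) := by
    refine (Finset.sum_filter_of_ne fun k _ hk => ?_).symm
    rw [Finset.nonempty_iff_ne_empty]
    rintro hGk
    rw [hGk, restr_empty, N_zero hN hγ hq] at hk
    exact hk rfl
  rcases K'.eq_empty_or_nonempty with hK' | hK'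
  · rw [hsum, hK', Finset.sum_empty, mul_zero]
    exact mul_nonneg (by positivity) (N_nonneg hN a)
  have hmem := mem_tiSet_of_finset (q := q) (γ := γ) (N := N) a hK' G
    (fun k hk => (Finset.mem_filter.1 hk).2)
    (fun k hk k' hk' => hG k (Finset.filter_subset _ _ hk) k' (Finset.filter_subset _ _ hk'))
  have hle := le_of_mem_tiSet hN hγ hq hmem
  rw [div_le_iff₀ (by positivity), ← hsum] at hle
  calc γ * ∑ k ∈ K, N (restr (G k) a) ≤ N a * (K'.card : ℝ) ^ (1 / q) := hle
    _ ≤ (K.card : ℝ) ^ (1 / q) * N a := by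
        rw [mul_comm]
        gcongr
        exacts [N_nonneg hN a, Finset.filter_subset _ _]

lemma N_restr_le (hN : TiEq q γ N) (hγ : 0 < γ) (hq : 1 < q) (F : Finset ℕ) (a : ℕ →₀ ℝ) :
    N (restr F a) ≤ N a := by
  rw [hN (restr F a)]
  refine max_le (ciSup_le fun i => ?_) (Real.sSup_le ?_ (N_nonneg hN a))
  · rw [restr_apply]
    split_ifs
    · exact abs_apply_le hN a i
    · exact abs_zero.trans_le (N_nonneg hN a)
  · rintro v ⟨m, hm, G, hG, rfl⟩
    rw [div_le_iff₀ (by positivity)]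
    simp_rw [restr_restr]
    have := sum_le_card_rpow_mul hN hγ hq a Finset.univ (fun k => G k ∩ F)
      fun k _ k' _ hkk' s hs t ht => hG.2 k k' hkk' s (Finset.mem_inter.1 hs).1 t
        (Finset.mem_inter.1 ht).1
    rw [Finset.card_univ, Fintype.card_fin] at this
    linarith

lemma sum_N_restr_eq_of_support_subset (hN : TiEq q γ N) (hγ : 0 < γ) (hq : 1 < q) {m : ℕ}
    {G : Fin m → Finset ℕ} (hG : Consec G) {a : ℕ →₀ ℝ} {k₀ : Fin m} (ha : a.support ⊆ G k₀) :
    ∑ k, N (restr (G k) a) = N a := by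
  rw [Finset.sum_eq_single k₀ (fun k _ hk => ?_) (by simp), restr_eq_self ha]
  rw [← restr_inter_support, Finset.disjoint_iff_inter_eq_empty.1
    (Finset.disjoint_of_subset_right ha (hG.disjoint hk)), restr_empty, N_zero hN hγ hq]

lemma mul_sum_N_restr_le_of_forall (hN : TiEq q γ N) (hγ : 0 < γ) (hq : 1 < q) {m : ℕ}
    {G : Fin m → Finset ℕ} (hG : Consec G) {a b c : ℕ →₀ ℝ}
    (h : ∀ k, N (restr (G k) c) ≤ N (restr (G k) a) + N (restr (G k) b)) :
    γ * ∑ k, N (restr (G k) c) ≤ (m : ℝ) ^ (1 / q) * (N a + N b) := by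
  have hsum := fun d => sum_le_card_rpow_mul hN hγ hq d Finset.univ G
    fun k _ k' _ hkk' => hG.2 k k' hkk'
  simp only [Finset.card_univ, Fintype.card_fin] at hsum
  calc γ * ∑ k, N (restr (G k) c)
      ≤ γ * ∑ k, N (restr (G k) a) + γ * ∑ k, N (restr (G k) b) := by
        rw [← mul_add, ← Finset.sum_add_distrib]
        exact mul_le_mul_of_nonneg_left (Finset.sum_le_sum fun k _ => h k) hγ.le
    _ ≤ (m : ℝ) ^ (1 / q) * (N a + N b) := by
        linarith [hsum a, hsum b]

/-- By induction on `#(supp a ∪ supp b)`: an admissible family either has a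
block containing both supports, and then contributes at most `γ N (a + b)` with `γ < 1`, or all
its blocks cut the supports properly. -/
lemma N_add_le (hN : TiEq q γ N) (hγ : 0 < γ) (hγ1 : γ < 1) (hq : 1 < q) (a b : ℕ →₀ ℝ) :
    N (a + b) ≤ N a + N b := by
  induction hd : (a.support ∪ b.support).card using Nat.strong_induction_on generalizing a b
    with | _ d ih =>
  have hab : 0 ≤ N a + N b := add_nonneg (N_nonneg hN a) (N_nonneg hN b)
  have key : N (a + b) ≤ max (γ * N (a + b)) (N a + N b) := by
    conv_lhs => rw [hN (a + b)]
    refine max_le (le_max_of_le_right (ciSup_le fun i => ?_))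
      (Real.sSup_le ?_ (hab.trans (le_max_right _ _)))
    · exact (abs_add_le _ _).trans (add_le_add (abs_apply_le hN a i) (abs_apply_le hN b i))
    rintro v ⟨m, hm, G, hG, rfl⟩
    have hm1 : (1 : ℝ) ≤ (m : ℝ) ^ (1 / q) :=
      Real.one_le_rpow (Nat.one_le_cast.2 hm) (by positivity)
    by_cases hcover : ∃ k, a.support ∪ b.support ⊆ G k
    · obtain ⟨k₀, hk₀⟩ := hcover
      rw [sum_N_restr_eq_of_support_subset hN hγ hq hG
        ((Finsupp.support_add).trans hk₀)]
      exact le_max_of_le_left (div_le_self (mul_nonneg hγ.le (N_nonneg hN _)) hm1)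
    push Not at hcover
    refine le_max_of_le_right ?_
    rw [div_le_iff₀ (by positivity), mul_comm _ (_ ^ _)]
    refine mul_sum_N_restr_le_of_forall hN hγ hq hG fun k => ?_
    rw [restr_add]
    refine ih _ ?_ _ _ rfl
    rw [← hd, support_restr, support_restr, ← Finset.union_inter_distrib_right]
    exact Finset.card_lt_card (Finset.ssubset_iff_subset_ne.2
      ⟨Finset.inter_subset_left, fun h => hcover k (Finset.inter_eq_left.1 h)⟩)
  rcases le_max_iff.1 key with h | h
  · nlinarith [N_nonneg hN (a + b)]
  · exact h

lemma N_sum_le {ι : Type*} (hN : TiEq q γ N) (hγ : 0 < γ) (hγ1 : γ < 1) (hq : 1 < q)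
    (s : Finset ι) (x : ι → ℕ →₀ ℝ) : N (∑ j ∈ s, x j) ≤ ∑ j ∈ s, N (x j) :=
  Finset.le_sum_of_subadditive N (N_zero hN hγ hq).le (N_add_le hN hγ hγ1 hq) s x

lemma N_restr_sum_le (hN : TiEq q γ N) (hγ : 0 < γ) (hγ1 : γ < 1) (hq : 1 < q) {n : ℕ}
    (s : Finset (Fin n)) (x : Fin n → ℕ →₀ ℝ) (G : Finset ℕ) :
    N (restr G (∑ j ∈ s, x j))
      ≤ ∑ j ∈ meets s x G \ interiorPoints (meets s x G), N (restr G (x j))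
        + N (∑ j ∈ interiorPoints (meets s x G), restr G (x j)) := by
  rw [restr_sum, ← Finset.sum_filter_ne_zero, ← Finset.sum_sdiff (interiorPoints_subset _)]
  exact (N_add_le hN hγ hγ1 hq _ _).trans (add_le_add (N_sum_le hN hγ hγ1 hq _ _) le_rfl)

lemma N_restr_sum_le_of_forall_ssubset (hN : TiEq q γ N) (hγ : 0 < γ) (hγ1 : γ < 1) (hq : 1 < q)
    {n : ℕ} {x : Fin n → ℕ →₀ ℝ} (hx : ConsecSupp x) {s : Finset (Fin n)}
    (ih : ∀ t ⊂ s, ∀ y : Fin n → ℕ →₀ ℝ, ConsecSupp y →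
      N (∑ j ∈ t, y j) ≤ (3 : ℝ) ^ (1 / q) * (∑ j ∈ t, N (y j) ^ p) ^ (1 / p))
    (hp : 0 < p) (G : Finset ℕ) :
    N (restr G (∑ j ∈ s, x j))
      ≤ ∑ j ∈ meets s x G \ interiorPoints (meets s x G), N (restr G (x j))
        + (3 : ℝ) ^ (1 / q) * (∑ j ∈ interiorPoints (meets s x G), N (x j) ^ p) ^ (1 / p) := by
  refine (N_restr_sum_le hN hγ hγ1 hq s x G).trans (add_le_add le_rfl ?_)
  rcases (interiorPoints (meets s x G)).eq_empty_or_nonempty with hmid | hmid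
  · rw [hmid, Finset.sum_empty, N_zero hN hγ hq]
    positivity
  have hsub : interiorPoints (meets s x G) ⊂ s :=
    (interiorPoints_ssubset (hmid.mono (interiorPoints_subset _))).trans_subset
      (meets_subset s x G)
  refine (ih _ hsub _ (hx.map_restr G)).trans ?_
  gcongr with j
  · exact Finset.sum_nonneg fun j _ => Real.rpow_nonneg (N_nonneg hN _) p
  · exact N_nonneg hN _
  · exact N_restr_le hN hγ hq G (x j)

lemma mul_sum_N_restr_le (hpq : p.HolderConjugate q) (hγ : 0 < γ) (hγ3 : γ * 3 ^ (1 / q) ≤ 1)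
    (hN : TiEq q γ N) {n : ℕ} {x : Fin n → ℕ →₀ ℝ} (hx : ConsecSupp x) {s : Finset (Fin n)}
    (ih : ∀ t ⊂ s, ∀ y : Fin n → ℕ →₀ ℝ, ConsecSupp y →
      N (∑ j ∈ t, y j) ≤ (3 : ℝ) ^ (1 / q) * (∑ j ∈ t, N (y j) ^ p) ^ (1 / p))
    {m : ℕ} {G : Fin m → Finset ℕ} (hG : Consec G) :
    γ * ∑ k, N (restr (G k) (∑ j ∈ s, x j))
      ≤ (3 * m : ℝ) ^ (1 / q) * (∑ j ∈ s, N (x j) ^ p) ^ (1 / p) := by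
  have hq : 1 < q := hpq.symm.lt
  have hC : 1 < (3 : ℝ) ^ (1 / q) := Real.one_lt_rpow (by norm_num) (by positivity)
  have hγ1 : γ < 1 := (lt_mul_of_one_lt_right hγ hC).trans_le hγ3
  have hγC : 0 ≤ γ * (3 : ℝ) ^ (1 / q) := mul_nonneg hγ.le (by positivity)
  set J : Fin m → Finset (Fin n) := fun k => meets s x (G k)
  set ends : Fin n → Finset (Fin m) :=
    fun j => Finset.univ.filter fun k => j ∈ J k \ interiorPoints (J k)
  have hJ : ∀ k k', k < k' → ∀ j ∈ J k, ∀ j' ∈ J k', j ≤ j' :=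
    fun k k' hkk' j hj j' hj' => le_of_mem_meets hx hG hkk' hj hj'
  have hswap : ∑ k, ∑ j ∈ J k \ interiorPoints (J k), N (restr (G k) (x j))
      = ∑ j ∈ s, ∑ k ∈ ends j, N (restr (G k) (x j)) := by
    refine Finset.sum_comm' fun k j => ?_
    simp only [ends, Finset.mem_filter, Finset.mem_univ, true_and]
    exact ⟨fun h => ⟨h, meets_subset s x (G k) (Finset.mem_sdiff.1 h).1⟩, And.left⟩
  have hsplit : ∑ k, N (restr (G k) (∑ j ∈ s, x j))
      ≤ ∑ j ∈ s, ∑ k ∈ ends j, N (restr (G k) (x j))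
        + ∑ k, 3 ^ (1 / q) * (∑ j ∈ interiorPoints (J k), N (x j) ^ p) ^ (1 / p) := by
    rw [← hswap, ← Finset.sum_add_distrib]
    exact Finset.sum_le_sum fun k _ =>
      N_restr_sum_le_of_forall_ssubset hN hγ hγ1 hq hx ih hpq.pos (G k)
  have hcount := sum_card_filter_mem_sdiff_interiorPoints_le s J
  calc γ * ∑ k, N (restr (G k) (∑ j ∈ s, x j))
      ≤ ∑ j ∈ s, γ * ∑ k ∈ ends j, N (restr (G k) (x j))
        + ∑ k, (γ * 3 ^ (1 / q)) * (∑ j ∈ interiorPoints (J k), N (x j) ^ p) ^ (1 / p) := by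
        refine (mul_le_mul_of_nonneg_left hsplit hγ.le).trans_eq ?_
        rw [mul_add, Finset.mul_sum, Finset.mul_sum]
        simp only [mul_assoc]
    _ ≤ ∑ j ∈ s, ((ends j).card : ℝ) ^ (1 / q) * N (x j)
        + ∑ k, (γ * 3 ^ (1 / q)) * (∑ j ∈ interiorPoints (J k), N (x j) ^ p) ^ (1 / p) :=
        add_le_add (Finset.sum_le_sum fun j _ => sum_le_card_rpow_mul hN hγ hq (x j) (ends j) G
          fun k _ k' _ h => hG.2 k k' h) le_rfl
    _ ≤ (3 * m : ℝ) ^ (1 / q) * (∑ j ∈ s, N (x j) ^ p) ^ (1 / p) := by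
        simpa only [Fintype.card_fin] using sum_card_rpow_mul_add_sum_le hpq
          (fun k => (interiorPoints_subset _).trans (meets_subset s x (G k)))
          (pairwise_disjoint_interiorPoints hJ) (c := fun j => (ends j).card)
          (fun k j hj => Finset.card_eq_zero.2 (Finset.filter_eq_empty_iff.2 fun k' _ =>
            notMem_sdiff_interiorPoints hJ hj k'))
          hcount (fun j => N_nonneg hN _) hγC (Real.rpow_le_one hγC hγ3 (by positivity))

lemma abs_sum_apply_le (hN : TiEq q γ N) {n : ℕ} {x : Fin n → ℕ →₀ ℝ} (hx : ConsecSupp x)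
    (hp : 0 < p) (s : Finset (Fin n)) (i : ℕ) :
    |(∑ j ∈ s, x j) i| ≤ (∑ j ∈ s, N (x j) ^ p) ^ (1 / p) := by
  have hNp : ∀ j, 0 ≤ N (x j) ^ p := fun j => Real.rpow_nonneg (N_nonneg hN _) p
  by_cases hi : ∃ j ∈ s, x j i ≠ 0
  · obtain ⟨j, hj, hji⟩ := hi
    rw [hx.sum_apply_eq hj hji]
    calc |x j i| ≤ N (x j) := abs_apply_le hN _ _
      _ = (N (x j) ^ p) ^ (1 / p) := by
          rw [← Real.rpow_mul (N_nonneg hN _), mul_one_div_cancel hp.ne', Real.rpow_one]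
      _ ≤ (∑ j ∈ s, N (x j) ^ p) ^ (1 / p) :=
          Real.rpow_le_rpow (hNp j) (Finset.single_le_sum (fun j _ => hNp j) hj)
            (one_div_pos.2 hp).le
  · push Not at hi
    rw [Finsupp.finsetSum_apply, Finset.sum_eq_zero hi, abs_zero]
    exact Real.rpow_nonneg (Finset.sum_nonneg fun j _ => hNp j) _

lemma N_sum_le_of_consecSupp (hpq : p.HolderConjugate q) (hγ : 0 < γ)
    (hγ3 : γ * 3 ^ (1 / q) ≤ 1) (hN : TiEq q γ N) {n : ℕ} (s : Finset (Fin n))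
    (x : Fin n → ℕ →₀ ℝ) (hx : ConsecSupp x) :
    N (∑ j ∈ s, x j) ≤ (3 : ℝ) ^ (1 / q) * (∑ j ∈ s, N (x j) ^ p) ^ (1 / p) := by
  induction s using Finset.strongInduction generalizing x with | H s ih =>
  have hq : 0 < q := hpq.symm.pos
  have hNp : ∀ j, 0 ≤ N (x j) ^ p := fun j => Real.rpow_nonneg (N_nonneg hN _) p
  have hA : 0 ≤ (∑ j ∈ s, N (x j) ^ p) ^ (1 / p) :=
    Real.rpow_nonneg (Finset.sum_nonneg fun j _ => hNp j) _
  have hC : 1 ≤ (3 : ℝ) ^ (1 / q) := Real.one_le_rpow (by norm_num) (by positivity)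
  rw [hN]
  refine max_le (ciSup_le fun i => ?_) (Real.sSup_le ?_ (mul_nonneg (by positivity) hA))
  · exact (abs_sum_apply_le hN hx hpq.pos s i).trans (le_mul_of_one_le_left hA hC)
  · rintro v ⟨m, hm, G, hG, rfl⟩
    rw [div_le_iff₀ (by positivity)]
    calc γ * ∑ k, N (restr (G k) (∑ j ∈ s, x j))
        ≤ (3 * m : ℝ) ^ (1 / q) * (∑ j ∈ s, N (x j) ^ p) ^ (1 / p) :=
          mul_sum_N_restr_le hpq hγ hγ3 hN hx ih hG
      _ = _ := by
          rw [Real.mul_rpow (by norm_num) (Nat.cast_nonneg _)]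
          ring

end TiNorm

/-- upper `p`-estimate for consecutively supported vectors in `Ti(p,γ)`
when `0 < γ < 3^{-1/q}`. -/
theorem stmt4 (p q γ : ℝ) (hp : 1 < p) (hpq : 1 / p + 1 / q = 1)
    (hγ0 : 0 < γ) (hγ3 : γ < (3 : ℝ) ^ (-(1 / q)))
    (N : (ℕ →₀ ℝ) → ℝ) (hN : TiEq q γ N)
    (n : ℕ) (x : Fin n → (ℕ →₀ ℝ)) (hxc : ConsecSupp x) :
    N (∑ j, x j) ≤ (3 : ℝ) ^ (1 / q) * (∑ j, N (x j) ^ p) ^ (1 / p) := by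
  have hpq' : p.HolderConjugate q :=
    Real.holderConjugate_iff.2 ⟨hp, by simpa only [one_div] using hpq⟩
  have hγ3' : γ * 3 ^ (1 / q) ≤ 1 :=
    calc γ * 3 ^ (1 / q) ≤ (3 : ℝ) ^ (-(1 / q)) * 3 ^ (1 / q) := by gcongr
      _ = 1 := by rw [← Real.rpow_add (by norm_num), neg_add_cancel, Real.rpow_zero]
  exact N_sum_le_of_consecSupp hpq' hγ0 hγ3' hN Finset.univ x hxc
end
end

section
/- Let X* be the dual of a reflexive Banach space X with a 1-unconditional basis (eⱼ), and suppose every normalized block basis (xⱼ*) of (eⱼ*) satisfies the lower ℓ_q estimate ‖∑aⱼxⱼ*‖ ≥ 3^{−1/q}(∑|aⱼ|^q)^{1/q}. If some normalized block basis (xⱼ*) of (eⱼ*) is C-equivalent to the unit vector basis of ℓ_q, then the closed span of (xⱼ*) is complemented in X* by a projection of norm at most 3^{1/q}C, and consequently X contains an isomorphic copy of ℓ_p (1/p + 1/q = 1). -/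
/-!
Coordinate projections of a 1-unconditional basis are contractive, so a functional `f` restricts
to block functionals `f ∘ P_{A j}` whose sum over any finite set of blocks has norm at most `‖f‖`.
Normalising them and applying the lower `ℓ_q` estimate shows that their norms form a sequence of
`ℓ_q`-norm at most `3^{1/q} ‖f‖`. Vectors `y j` supported on `A j` and norming `xs j` (they exist
since the blocks are finite dimensional) give coefficients `|f (y j)| ≤ ‖f ∘ P_{A j}‖`, so by the
upper `ℓ_q` estimate of `(xs j)` the series `P f = ∑ f (y j) • xs j` converges with
`‖P f‖ ≤ 3^{1/q} C ‖f‖`, and biorthogonality makes `P` a projection. Dualising the same two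
estimates with Hölder's inequality shows that `(y j)` is equivalent to the unit vector basis of
`ℓ_p`.
-/

open Finset Filter Function

section SeriesEstimates

variable {E F : Type*} [NormedAddCommGroup E] [NormedSpace ℝ E]
  [NormedAddCommGroup F] [NormedSpace ℝ F]

theorem summable_smul_of_norm_sum_smul_le [CompleteSpace F] {r K M : ℝ} (hr : 0 < r)
    {v : ℕ → F} {a : ℕ → ℝ} (ha : ∀ s : Finset ℕ, (∑ j ∈ s, |a j| ^ r) ^ (1 / r) ≤ M)
    (hv : ∀ s : Finset ℕ, ‖∑ j ∈ s, a j • v j‖ ≤ K * (∑ j ∈ s, |a j| ^ r) ^ (1 / r)) :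
    Summable fun j => a j • v j := by
  have hsum : Summable fun j => |a j| ^ r := by
    refine summable_of_sum_le (c := M ^ r) (fun j => by positivity) fun s => ?_
    calc ∑ j ∈ s, |a j| ^ r = ((∑ j ∈ s, |a j| ^ r) ^ (1 / r)) ^ r := by
          rw [one_div, Real.rpow_inv_rpow (by positivity) hr.ne']
      _ ≤ M ^ r := Real.rpow_le_rpow (by positivity) (ha s) hr.le
  rw [summable_iff_vanishing_norm]
  intro ε hε
  set δ := ε / (|K| + 1)
  have hδ : 0 < δ := by positivity
  obtain ⟨s, hs⟩ := summable_iff_vanishing_norm.mp hsum (δ ^ r) (by positivity)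
  refine ⟨s, fun t ht => ?_⟩
  have htail : (∑ j ∈ t, |a j| ^ r) ^ (1 / r) < δ := by
    have h := hs t ht
    rw [Real.norm_of_nonneg (by positivity)] at h
    calc (∑ j ∈ t, |a j| ^ r) ^ (1 / r) < (δ ^ r) ^ (1 / r) :=
          Real.rpow_lt_rpow (by positivity) h (by positivity)
      _ = δ := by rw [one_div, Real.rpow_rpow_inv hδ.le hr.ne']
  calc ‖∑ j ∈ t, a j • v j‖ ≤ K * (∑ j ∈ t, |a j| ^ r) ^ (1 / r) := hv t
    _ ≤ |K| * δ := by gcongr; exact le_abs_self K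
    _ < (|K| + 1) * δ := by gcongr; linarith
    _ = ε := mul_div_cancel₀ ε (by positivity)

theorem exists_clm_hasSum_of_norm_sum_le (φ : ℕ → E →L[ℝ] ℝ) (v : ℕ → F)
    (hsum : ∀ x, Summable fun j => φ j x • v j) {K : ℝ} (hK : 0 ≤ K)
    (hbound : ∀ x (s : Finset ℕ), ‖∑ j ∈ s, φ j x • v j‖ ≤ K * ‖x‖) :
    ∃ S : E →L[ℝ] F, (∀ x, HasSum (fun j => φ j x • v j) (S x)) ∧ ‖S‖ ≤ K := by
  let S : E →ₗ[ℝ] F :=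
    { toFun := fun x => ∑' j, φ j x • v j
      map_add' := fun x y => by
        simp only [map_add, add_smul]
        exact (hsum x).tsum_add (hsum y)
      map_smul' := fun c x => by
        simp only [map_smul, smul_eq_mul, mul_smul, RingHom.id_apply]
        exact (hsum x).tsum_const_smul c }
  have hS : ∀ x, ‖S x‖ ≤ K * ‖x‖ := fun x =>
    le_of_tendsto ((continuous_norm.tendsto _).comp (hsum x).hasSum)
      (Eventually.of_forall (hbound x))
  exact ⟨S.mkContinuous K hS, fun x => (hsum x).hasSum, S.mkContinuous_norm_le hK hS⟩

theorem exists_projection_of_biorthogonal {u : ℕ → E} {φ : ℕ → E →L[ℝ] ℝ}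
    (hbi : ∀ j k, φ j (u k) = if j = k then 1 else 0)
    (hsum : ∀ x, Summable fun j => φ j x • u j) {K : ℝ} (hK : 0 ≤ K)
    (hbound : ∀ x (s : Finset ℕ), ‖∑ j ∈ s, φ j x • u j‖ ≤ K * ‖x‖) :
    ∃ P : E →L[ℝ] E, P.comp P = P ∧ ‖P‖ ≤ K ∧ (∀ j, P (u j) = u j) ∧
      Set.range P ⊆ closure (Submodule.span ℝ (Set.range u) : Set E) := by
  obtain ⟨P, hP, hPK⟩ := exists_clm_hasSum_of_norm_sum_le φ u hsum hK hbound
  have hPu : ∀ k, P (u k) = u k := fun k => (hP (u k)).unique <| by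
    convert hasSum_ite_eq k (u k) using 2 with j
    by_cases h : j = k <;> simp [hbi, h]
  refine ⟨P, ContinuousLinearMap.ext fun x => ?_, hPK, hPu, ?_⟩
  · refine ((hP x).mapL P).unique ?_
    simpa only [map_smul, hPu] using hP x
  · rintro _ ⟨x, rfl⟩
    exact mem_closure_of_tendsto (hP x) (Eventually.of_forall fun s =>
      Submodule.sum_mem _ fun j _ => Submodule.smul_mem _ _ (Submodule.subset_span ⟨j, rfl⟩))

theorem exists_projection_of_rpow_estimates [CompleteSpace E] {q C K : ℝ} (hq : 0 < q)
    (hC : 0 ≤ C) (hK : 0 ≤ K) {u : ℕ → E} {φ : ℕ → E →L[ℝ] ℝ}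
    (hbi : ∀ j k, φ j (u k) = if j = k then 1 else 0)
    (hu : ∀ (c : ℕ → ℝ) (s : Finset ℕ), ‖∑ j ∈ s, c j • u j‖ ≤ C * (∑ j ∈ s, |c j| ^ q) ^ (1 / q))
    (hφ : ∀ x (s : Finset ℕ), (∑ j ∈ s, |φ j x| ^ q) ^ (1 / q) ≤ K * ‖x‖) :
    ∃ P : E →L[ℝ] E, P.comp P = P ∧ ‖P‖ ≤ K * C ∧ (∀ j, P (u j) = u j) ∧
      Set.range P ⊆ closure (Submodule.span ℝ (Set.range u) : Set E) := by
  refine exists_projection_of_biorthogonal hbi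
    (fun x => summable_smul_of_norm_sum_smul_le hq (hφ x) (hu _)) (by positivity) fun x s => ?_
  calc ‖∑ j ∈ s, φ j x • u j‖ ≤ C * (∑ j ∈ s, |φ j x| ^ q) ^ (1 / q) := hu _ s
    _ ≤ C * (K * ‖x‖) := by gcongr; exact hφ x s
    _ = K * C * ‖x‖ := by ring

theorem norm_sum_smul_le_of_dual {p q K : ℝ} (hpq : p.HolderConjugate q) (hK : 0 ≤ K)
    {y : ℕ → E} (hy : ∀ (f : E →L[ℝ] ℝ) (s : Finset ℕ),
      (∑ j ∈ s, |f (y j)| ^ q) ^ (1 / q) ≤ K * ‖f‖)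
    (a : ℕ → ℝ) (s : Finset ℕ) :
    ‖∑ j ∈ s, a j • y j‖ ≤ K * (∑ j ∈ s, |a j| ^ p) ^ (1 / p) := by
  refine NormedSpace.norm_le_dual_bound ℝ _ (by positivity) fun f => ?_
  calc ‖f (∑ j ∈ s, a j • y j)‖ = |∑ j ∈ s, a j * f (y j)| := by simp
    _ ≤ ∑ j ∈ s, |a j| * |f (y j)| := by
        simpa only [abs_mul] using abs_sum_le_sum_abs (fun j => a j * f (y j)) s
    _ ≤ (∑ j ∈ s, |a j| ^ p) ^ (1 / p) * (∑ j ∈ s, |f (y j)| ^ q) ^ (1 / q) := by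
        simpa only [abs_abs] using
          Real.inner_le_Lp_mul_Lq s (fun j => |a j|) (fun j => |f (y j)|) hpq
    _ ≤ (∑ j ∈ s, |a j| ^ p) ^ (1 / p) * (K * ‖f‖) := by gcongr; exact hy f s
    _ = K * (∑ j ∈ s, |a j| ^ p) ^ (1 / p) * ‖f‖ := by ring

theorem exists_mul_eq_abs_rpow {p q : ℝ} (hpq : p.HolderConjugate q) (t : ℝ) :
    ∃ c : ℝ, c * t = |t| ^ p ∧ |c| ^ q = |t| ^ p := by
  rcases eq_or_ne t 0 with rfl | ht
  · refine ⟨0, ?_, ?_⟩ <;> simp [Real.zero_rpow hpq.ne_zero, Real.zero_rpow hpq.symm.ne_zero]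
  · refine ⟨|t| ^ p / t, div_mul_cancel₀ _ ht, ?_⟩
    rw [abs_div, abs_of_nonneg (by positivity), ← Real.rpow_sub_one (abs_ne_zero.mpr ht),
      ← Real.rpow_mul (abs_nonneg t), hpq.sub_one_mul_conj]

theorem le_norm_sum_smul_of_biorthogonal {p q C : ℝ} (hpq : p.HolderConjugate q) (hC : 0 < C)
    {y : ℕ → E} {φ : ℕ → E →L[ℝ] ℝ} (hbi : ∀ j k, φ j (y k) = if j = k then 1 else 0)
    (hφ : ∀ (c : ℕ → ℝ) (s : Finset ℕ),
      ‖∑ j ∈ s, c j • φ j‖ ≤ C * (∑ j ∈ s, |c j| ^ q) ^ (1 / q))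
    (a : ℕ → ℝ) (s : Finset ℕ) :
    C⁻¹ * (∑ j ∈ s, |a j| ^ p) ^ (1 / p) ≤ ‖∑ j ∈ s, a j • y j‖ := by
  set S := ∑ j ∈ s, |a j| ^ p
  set v := ∑ j ∈ s, a j • y j
  choose c hca hcq using exists_mul_eq_abs_rpow hpq
  have hgv : (∑ j ∈ s, c (a j) • φ j) v = S := by
    simp only [v, map_sum, map_smul, FunLike.coe_sum, Finset.sum_apply,
      FunLike.coe_smul, Pi.smul_apply, hbi, smul_eq_mul, mul_ite, mul_one, mul_zero]
    refine sum_congr rfl fun j hj => ?_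
    rw [sum_ite_eq', if_pos hj, mul_comm, hca]
  have hg : ‖∑ j ∈ s, c (a j) • φ j‖ ≤ C * S ^ (1 / q) := by
    simpa only [hcq] using hφ (fun j => c (a j)) s
  rcases (show 0 ≤ S by positivity).eq_or_lt with hS | hS
  · rw [← hS, Real.zero_rpow (by simp [hpq.ne_zero]), mul_zero]
    exact norm_nonneg v
  have hSv : S ≤ C * S ^ (1 / q) * ‖v‖ := by
    calc S = (∑ j ∈ s, c (a j) • φ j) v := hgv.symm
      _ ≤ ‖∑ j ∈ s, c (a j) • φ j‖ * ‖v‖ :=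
          (le_abs_self _).trans ((∑ j ∈ s, c (a j) • φ j).le_opNorm v)
      _ ≤ C * S ^ (1 / q) * ‖v‖ := by gcongr
  have hsplit : S ^ (1 / p) * S ^ (1 / q) = S := by
    rw [← Real.rpow_add hS, hpq.one_div_add_one_div, div_one, Real.rpow_one]
  rw [inv_mul_le_iff₀ hC]
  refine le_of_mul_le_mul_right ?_ (Real.rpow_pos_of_pos hS (1 / q))
  calc S ^ (1 / p) * S ^ (1 / q) = S := hsplit
    _ ≤ C * S ^ (1 / q) * ‖v‖ := hSv
    _ = C * ‖v‖ * S ^ (1 / q) := by ring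

theorem exists_lp_embedding [CompleteSpace F] {p K c : ℝ} [Fact (1 ≤ ENNReal.ofReal p)]
    (hK : 0 ≤ K) {y : ℕ → F}
    (hupper : ∀ (a : ℕ → ℝ) (s : Finset ℕ),
      ‖∑ j ∈ s, a j • y j‖ ≤ K * (∑ j ∈ s, |a j| ^ p) ^ (1 / p))
    (hlower : ∀ (a : ℕ → ℝ) (s : Finset ℕ),
      c * (∑ j ∈ s, |a j| ^ p) ^ (1 / p) ≤ ‖∑ j ∈ s, a j • y j‖) :
    ∃ T : lp (fun _ : ℕ => ℝ) (ENNReal.ofReal p) →L[ℝ] F, ∀ f, c * ‖f‖ ≤ ‖T f‖ := by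
  have hp : 0 < p := one_pos.trans_le (ENNReal.one_le_ofReal.mp Fact.out)
  have hpt : (ENNReal.ofReal p).toReal = p := ENNReal.toReal_ofReal hp.le
  have hnorm (f : lp (fun _ : ℕ => ℝ) (ENNReal.ofReal p)) :
      HasSum (fun j => |f j| ^ p) (‖f‖ ^ p) := by
    simpa [hpt] using lp.hasSum_norm (hpt.symm ▸ hp) f
  have hroot (f : lp (fun _ : ℕ => ℝ) (ENNReal.ofReal p)) : (‖f‖ ^ p) ^ (1 / p) = ‖f‖ := by
    rw [one_div, Real.rpow_rpow_inv (norm_nonneg f) hp.ne']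
  have hpartial (f : lp (fun _ : ℕ => ℝ) (ENNReal.ofReal p)) (s : Finset ℕ) :
      (∑ j ∈ s, |f j| ^ p) ^ (1 / p) ≤ ‖f‖ :=
    calc (∑ j ∈ s, |f j| ^ p) ^ (1 / p) ≤ (‖f‖ ^ p) ^ (1 / p) := Real.rpow_le_rpow (by positivity)
          (sum_le_hasSum s (fun j _ => by positivity) (hnorm f)) (by positivity)
      _ = ‖f‖ := hroot f
  obtain ⟨T, hT, -⟩ := exists_clm_hasSum_of_norm_sum_le
    (fun j => lp.evalCLM ℝ (fun _ : ℕ => ℝ) (ENNReal.ofReal p) j) y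
    (fun f => summable_smul_of_norm_sum_smul_le hp (hpartial f) (hupper f)) hK
    (fun f s => (hupper f s).trans (by gcongr; exact hpartial f s))
  refine ⟨T, fun f => le_of_tendsto_of_tendsto' ?_ ((continuous_norm.tendsto _).comp (hT f))
    (hlower f)⟩
  have hroots := ((Real.continuous_rpow_const (by positivity : (0 : ℝ) ≤ 1 / p)).tendsto _).comp
    (hnorm f)
  rw [hroot f] at hroots
  exact hroots.const_mul c

end SeriesEstimates

theorem exists_norm_le_one_apply_eq_norm {V : Type*} [NormedAddCommGroup V] [NormedSpace ℝ V]
    [FiniteDimensional ℝ V] (g : V →L[ℝ] ℝ) : ∃ v, ‖v‖ ≤ 1 ∧ g v = ‖g‖ := by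
  obtain ⟨v, hv, hmax⟩ := (isCompact_closedBall (0 : V) 1).exists_isMaxOn
    ⟨0, Metric.mem_closedBall_self zero_le_one⟩ g.continuous.continuousOn
  have hv1 : ‖v‖ ≤ 1 := mem_closedBall_zero_iff.mp hv
  refine ⟨v, hv1, le_antisymm ?_ ?_⟩
  · calc g v ≤ ‖g v‖ := le_abs_self _
      _ ≤ ‖g‖ * ‖v‖ := g.le_opNorm v
      _ ≤ ‖g‖ := mul_le_of_le_one_right (norm_nonneg g) hv1
  · by_contra! hlt
    obtain ⟨x, hx, hgx⟩ := g.exists_lt_apply_of_lt_opNorm hlt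
    have hball : ∀ w : V, ‖w‖ < 1 → g w ≤ g v := fun w hw =>
      hmax (mem_closedBall_zero_iff.mpr hw.le)
    rw [Real.norm_eq_abs, lt_abs] at hgx
    rcases hgx with h | h
    · exact (hball x hx).not_gt h
    · exact (hball (-x) (by rwa [norm_neg])).not_gt (by rwa [map_neg])

section CoordinateProjections

variable {X : Type*} [NormedAddCommGroup X] [NormedSpace ℝ X] {e : ℕ → X} {b : ℕ → X →L[ℝ] ℝ}

variable (e b) in
def coordProj (s : Finset ℕ) : X →L[ℝ] X := ∑ i ∈ s, (b i).smulRight (e i)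

variable (e b) in
theorem coordProj_apply (s : Finset ℕ) (x : X) : coordProj e b s x = ∑ i ∈ s, b i x • e i := by
  simp [coordProj]

variable (e b) in
theorem comp_coordProj (f : X →L[ℝ] ℝ) (s : Finset ℕ) :
    f.comp (coordProj e b s) = ∑ i ∈ s, f (e i) • b i := by
  ext x
  simp [coordProj_apply, mul_comm]

theorem coordProj_biUnion {ι : Type*} {t : Finset ι} {A : ι → Finset ℕ}
    (hA : (t : Set ι).PairwiseDisjoint A) :
    coordProj e b (t.biUnion A) = ∑ j ∈ t, coordProj e b (A j) :=
  sum_biUnion hA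

theorem norm_sum_filter_smul_le
    (huncond : ∀ (s : Finset ℕ) (a ε : ℕ → ℝ), (∀ n, ε n = 1 ∨ ε n = -1) →
      ‖∑ i ∈ s, (ε i * a i) • e i‖ = ‖∑ i ∈ s, a i • e i‖)
    (s t : Finset ℕ) (a : ℕ → ℝ) :
    ‖∑ i ∈ t with i ∈ s, a i • e i‖ ≤ ‖∑ i ∈ t, a i • e i‖ := by
  classical
  set ε : ℕ → ℝ := fun i => if i ∈ s then 1 else -1
  have hflip := huncond t a ε fun i => by by_cases h : i ∈ s <;> simp [ε, h]
  -- the filtered sum is the average of the vector and its sign flip off `s`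
  have havg : ∑ i ∈ t with i ∈ s, a i • e i =
      (2 : ℝ)⁻¹ • (∑ i ∈ t, a i • e i + ∑ i ∈ t, (ε i * a i) • e i) := by
    rw [← sum_add_distrib, smul_sum, sum_filter]
    refine sum_congr rfl fun i _ => ?_
    by_cases h : i ∈ s <;> simp only [ε, h, ↓reduceIte] <;> module
  rw [havg, norm_smul, Real.norm_of_nonneg (by norm_num)]
  calc (2 : ℝ)⁻¹ * ‖∑ i ∈ t, a i • e i + ∑ i ∈ t, (ε i * a i) • e i‖
      ≤ 2⁻¹ * (‖∑ i ∈ t, a i • e i‖ + ‖∑ i ∈ t, (ε i * a i) • e i‖) := by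
        gcongr
        exact norm_add_le _ _
    _ = ‖∑ i ∈ t, a i • e i‖ := by rw [hflip]; ring

section Biorthogonal

variable (hbio : ∀ i j, b i (e j) = if i = j then 1 else 0)
include hbio

theorem apply_coordProj (i : ℕ) (s : Finset ℕ) (x : X) :
    b i (coordProj e b s x) = if i ∈ s then b i x else 0 := by
  simp [coordProj_apply, hbio]

theorem coordProj_apply_basis (s : Finset ℕ) (l : ℕ) :
    coordProj e b s (e l) = if l ∈ s then e l else 0 := by
  simp [coordProj_apply, hbio]

theorem coordProj_sum_smul (s t : Finset ℕ) (a : ℕ → ℝ) :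
    coordProj e b s (∑ i ∈ t, a i • e i) = ∑ i ∈ t with i ∈ s, a i • e i := by
  simp [coordProj_apply_basis hbio, sum_filter]

theorem norm_coordProj_le
    (hdense : DenseRange fun a : ℕ →₀ ℝ => a.sum fun i c => c • e i)
    (huncond : ∀ (s : Finset ℕ) (a ε : ℕ → ℝ), (∀ n, ε n = 1 ∨ ε n = -1) →
      ‖∑ i ∈ s, (ε i * a i) • e i‖ = ‖∑ i ∈ s, a i • e i‖)
    (s : Finset ℕ) : ‖coordProj e b s‖ ≤ 1 := by
  refine ContinuousLinearMap.opNorm_le_bound _ zero_le_one fun x => ?_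
  rw [one_mul]
  have hclosed : IsClosed {x : X | ‖coordProj e b s x‖ ≤ ‖x‖} :=
    isClosed_le (continuous_norm.comp (coordProj e b s).continuous) continuous_norm
  refine hclosed.closure_subset_iff.mpr ?_ (hdense x)
  rintro _ ⟨a, rfl⟩
  simpa only [Set.mem_ofPred_eq, Finsupp.sum, coordProj_sum_smul hbio]
    using norm_sum_filter_smul_le huncond s a.support a

theorem sum_smul_comp_coordProj (c : ℕ → ℝ) (s t : Finset ℕ) :
    (∑ i ∈ s, c i • b i).comp (coordProj e b t) = ∑ i ∈ s ∩ t, c i • b i := by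
  ext x
  simp [apply_coordProj hbio, sum_ite_mem]

theorem exists_norming_vector_of_comp_coordProj {s : Finset ℕ} (hP : ‖coordProj e b s‖ ≤ 1)
    {φ : X →L[ℝ] ℝ} (hφ : φ.comp (coordProj e b s) = φ) :
    ∃ y, ‖y‖ ≤ 1 ∧ φ y = ‖φ‖ ∧ coordProj e b s y = y := by
  set V := Submodule.span ℝ (e '' s)
  have : FiniteDimensional ℝ V := FiniteDimensional.span_of_finite ℝ (s.finite_toSet.image e)
  have hPV : ∀ x, coordProj e b s x ∈ V := fun x => by
    rw [coordProj_apply]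
    exact Submodule.sum_mem _ fun i hi =>
      Submodule.smul_mem _ _ (Submodule.subset_span ⟨i, hi, rfl⟩)
  have hfix : ∀ v ∈ V, coordProj e b s v = v :=
    LinearMap.eqOn_span' (f := (coordProj e b s : X →ₗ[ℝ] X)) (g := LinearMap.id) <| by
      rintro _ ⟨l, hl, rfl⟩
      simp [coordProj_apply_basis hbio, Finset.mem_coe.mp hl]
  set g := φ.comp V.subtypeL
  obtain ⟨v, hv1, hgv⟩ := exists_norm_le_one_apply_eq_norm g
  -- `φ` factors through the contractive projection onto `V`, so restricting it keeps its norm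
  have hg : ‖g‖ = ‖φ‖ := by
    refine le_antisymm ((φ.opNorm_comp_le _).trans
      (mul_le_of_le_one_right (norm_nonneg φ) (Submodule.norm_subtypeL_le V))) ?_
    refine φ.opNorm_le_bound (norm_nonneg g) fun x => ?_
    calc ‖φ x‖ = ‖g ⟨_, hPV x⟩‖ := by rw [← hφ]; rfl
      _ ≤ ‖g‖ * ‖coordProj e b s x‖ := g.le_opNorm _
      _ ≤ ‖g‖ * ‖x‖ := by
          gcongr
          simpa using (coordProj e b s).le_of_opNorm_le hP x
  exact ⟨v, hv1, hgv.trans hg, hfix v v.2⟩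

theorem exists_norming_vectors_of_blocks (hP : ∀ s, ‖coordProj e b s‖ ≤ 1)
    {A : ℕ → Finset ℕ} (hA : Pairwise (Disjoint on A)) {xs : ℕ → X →L[ℝ] ℝ} {co : ℕ → ℝ}
    (hxs : ∀ j, xs j = ∑ i ∈ A j, co i • b i) (hxn : ∀ j, ‖xs j‖ = 1) :
    ∃ y : ℕ → X, (∀ j k, xs j (y k) = if j = k then 1 else 0) ∧
      ∀ (f : X →L[ℝ] ℝ) j, |f (y j)| ≤ ‖f.comp (coordProj e b (A j))‖ := by
  have hnorming (j : ℕ) : ∃ y, ‖y‖ ≤ 1 ∧ xs j y = 1 ∧ coordProj e b (A j) y = y := by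
    simpa only [hxn] using exists_norming_vector_of_comp_coordProj hbio (hP (A j)) (φ := xs j)
      (by rw [hxs, sum_smul_comp_coordProj hbio, inter_self])
  choose y hy1 hyx hyP using hnorming
  refine ⟨y, fun j k => ?_, fun f j => ?_⟩
  · split_ifs with h
    · exact h ▸ hyx j
    · rw [← hyP k, ← ContinuousLinearMap.comp_apply, hxs, sum_smul_comp_coordProj hbio,
        disjoint_iff_inter_eq_empty.mp (hA h), sum_empty]
      rfl
  · rw [← Real.norm_eq_abs, ← hyP j, ← ContinuousLinearMap.comp_apply]
    exact (ContinuousLinearMap.le_opNorm _ _).trans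
      (mul_le_of_le_one_right (norm_nonneg _) (hy1 j))

end Biorthogonal
end CoordinateProjections

section Blocks

theorem pairwise_disjoint_of_forall_lt {A : ℕ → Finset ℕ}
    (hA : ∀ j k : ℕ, j < k → ∀ s ∈ A j, ∀ t ∈ A k, s < t) : Pairwise (Disjoint on A) := by
  intro j k hjk
  refine Finset.disjoint_left.mpr fun i hij hik => ?_
  rcases hjk.lt_or_gt with h | h
  · exact (hA j k h i hij i hik).false
  · exact (hA k j h i hik i hij).false

theorem exists_eq_on_pairwise_disjoint {ι α β : Type*} [Nonempty β] {A : ι → Finset α}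
    (hA : Pairwise (Disjoint on A)) (c : ι → α → β) :
    ∃ w : α → β, ∀ j, ∀ i ∈ A j, w i = c j i := by
  have : ∀ i, ∃ x : β, ∀ j, i ∈ A j → x = c j i := by
    intro i
    by_cases h : ∃ j, i ∈ A j
    · obtain ⟨j₀, hj₀⟩ := h
      exact ⟨c j₀ i, fun j hj => by rw [hA.eq (Finset.not_disjoint_iff.mpr ⟨i, hj₀, hj⟩)]⟩
    · exact ⟨Classical.arbitrary β, fun j hj => (h ⟨j, hj⟩).elim⟩
  choose w hw using this
  exact ⟨w, fun j i hi => hw i j hi⟩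

theorem sum_fin_ite_mem {M : Type*} [AddCommMonoid M] {g : ℕ → ℝ → M} (hg : ∀ j, g j 0 = 0)
    {s : Finset ℕ} {n : ℕ} (hs : s ⊆ range n) (a : ℕ → ℝ) :
    ∑ j : Fin n, g j (if (j : ℕ) ∈ s then a j else 0) = ∑ j ∈ s, g j (a j) := by
  rw [Fin.sum_univ_eq_sum_range (fun j => g j (if j ∈ s then a j else 0)) n]
  simp only [apply_ite (g _), hg, sum_ite_mem, inter_eq_right.mpr hs]

theorem forall_finset_of_forall_fin {M : Type*} [AddCommMonoid M] [Module ℝ M] {q : ℝ}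
    (hq : q ≠ 0) {x : ℕ → M} {R : ℝ → M → Prop}
    (h : ∀ (n : ℕ) (a : Fin n → ℝ), R (∑ j, |a j| ^ q) (∑ j, a j • x j))
    (a : ℕ → ℝ) (s : Finset ℕ) : R (∑ j ∈ s, |a j| ^ q) (∑ j ∈ s, a j • x j) := by
  obtain ⟨n, hn⟩ := s.exists_nat_subset_range
  simpa only [sum_fin_ite_mem (g := fun _ t => |t| ^ q) (fun _ => by simp [hq]) hn,
    sum_fin_ite_mem (g := fun j t => t • x j) (fun j => zero_smul ℝ (x j)) hn]
    using h n fun j => if (j : ℕ) ∈ s then a j else 0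

variable {X : Type*} [NormedAddCommGroup X] [NormedSpace ℝ X] {e : ℕ → X} {b : ℕ → X →L[ℝ] ℝ}

variable (b) in
def LowerBlockEstimate (q : ℝ) : Prop :=
  ∀ (zs : ℕ → X →L[ℝ] ℝ) (B : ℕ → Finset ℕ) (w : ℕ → ℝ),
    (∀ j, zs j = ∑ i ∈ B j, w i • b i) → (∀ j, (B j).Nonempty) →
    (∀ j k : ℕ, j < k → ∀ s ∈ B j, ∀ t ∈ B k, s < t) → (∀ j, ‖zs j‖ = 1) →
    ∀ (n : ℕ) (a : Fin n → ℝ),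
      (3 : ℝ) ^ (-(1 / q)) * (∑ j, |a j| ^ q) ^ (1 / q) ≤ ‖∑ j, a j • zs (j : ℕ)‖

theorem le_norm_sum_smul_of_lowerBlockEstimate {q : ℝ} (hq : 0 < q)
    (hlow : LowerBlockEstimate b q)
    {A : ℕ → Finset ℕ} (hAne : ∀ j, (A j).Nonempty)
    (hA : ∀ j k : ℕ, j < k → ∀ s ∈ A j, ∀ t ∈ A k, s < t)
    {zs : ℕ → X →L[ℝ] ℝ} (c : ℕ → ℕ → ℝ) (hzs : ∀ j, zs j = ∑ i ∈ A j, c j i • b i)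
    (hzn : ∀ j, ‖zs j‖ = 1) (a : ℕ → ℝ) (s : Finset ℕ) :
    (3 : ℝ) ^ (-(1 / q)) * (∑ j ∈ s, |a j| ^ q) ^ (1 / q) ≤ ‖∑ j ∈ s, a j • zs j‖ := by
  obtain ⟨w, hw⟩ := exists_eq_on_pairwise_disjoint (pairwise_disjoint_of_forall_lt hA) c
  exact forall_finset_of_forall_fin (R := fun S v => (3 : ℝ) ^ (-(1 / q)) * S ^ (1 / q) ≤ ‖v‖)
    hq.ne' (hlow zs A w (fun j => (hzs j).trans (sum_congr rfl fun i hi => by rw [hw j i hi]))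
      hAne hA hzn) a s

theorem rpow_sum_norm_comp_coordProj_le {q : ℝ} (hq : 0 < q)
    (hP : ∀ s, ‖coordProj e b s‖ ≤ 1)
    (hlow : LowerBlockEstimate b q)
    {A : ℕ → Finset ℕ} (hAne : ∀ j, (A j).Nonempty)
    (hA : ∀ j k : ℕ, j < k → ∀ s ∈ A j, ∀ t ∈ A k, s < t)
    {xs : ℕ → X →L[ℝ] ℝ} {co : ℕ → ℝ} (hxs : ∀ j, xs j = ∑ i ∈ A j, co i • b i)
    (hxn : ∀ j, ‖xs j‖ = 1) (f : X →L[ℝ] ℝ) (s : Finset ℕ) :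
    (∑ j ∈ s, ‖f.comp (coordProj e b (A j))‖ ^ q) ^ (1 / q) ≤ 3 ^ (1 / q) * ‖f‖ := by
  set Q := fun j => f.comp (coordProj e b (A j))
  -- normalise the block functionals, falling back on `xs j` where `Q j` vanishes
  set zs := fun j => if ‖Q j‖ = 0 then xs j else ‖Q j‖⁻¹ • Q j
  have hzs : ∀ j, zs j = ∑ i ∈ A j, (if ‖Q j‖ = 0 then co i else ‖Q j‖⁻¹ * f (e i)) • b i := by
    intro j
    by_cases h : ‖Q j‖ = 0
    · simp [zs, h, hxs]
    · simp_rw [zs, if_neg h]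
      simp only [Q, comp_coordProj, smul_sum, smul_smul]
  have hzn : ∀ j, ‖zs j‖ = 1 := by
    intro j
    by_cases h : ‖Q j‖ = 0
    · simp [zs, h, hxn]
    · simp [zs, h, norm_smul]
  have hQ : ∀ j, ‖Q j‖ • zs j = Q j := by
    intro j
    by_cases h : ‖Q j‖ = 0
    · rw [h, zero_smul, norm_eq_zero.mp h]
    · simp [zs, h, smul_smul]
  have hsum : ‖∑ j ∈ s, ‖Q j‖ • zs j‖ ≤ ‖f‖ := by
    rw [sum_congr rfl fun j _ => hQ j, ← ContinuousLinearMap.comp_finsetSum,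
      ← coordProj_biUnion ((pairwise_disjoint_of_forall_lt hA).set_pairwise _)]
    exact (f.opNorm_comp_le _).trans (mul_le_of_le_one_right (norm_nonneg f) (hP _))
  have h := (le_norm_sum_smul_of_lowerBlockEstimate hq hlow hAne hA _ hzs hzn
    (fun j => ‖Q j‖) s).trans hsum
  simp only [abs_norm] at h
  rwa [Real.rpow_neg (by norm_num), inv_mul_le_iff₀ (by positivity)] at h

end Blocks

theorem stmt12_general {X : Type*} [NormedAddCommGroup X] [NormedSpace ℝ X] [CompleteSpace X]
    (p q C : ℝ) (hp : 1 < p) (hpq : 1 / p + 1 / q = 1) (hC : 1 ≤ C)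
    [Fact (1 ≤ ENNReal.ofReal p)]
    (e : ℕ → X) (b : ℕ → X →L[ℝ] ℝ)
    (hbio : ∀ i j, b i (e j) = if i = j then 1 else 0)
    (hdense : DenseRange fun a : ℕ →₀ ℝ => a.sum fun i c => c • e i)
    (huncond : ∀ (s : Finset ℕ) (a ε : ℕ → ℝ), (∀ n, ε n = 1 ∨ ε n = -1) →
      ‖∑ i ∈ s, (ε i * a i) • e i‖ = ‖∑ i ∈ s, a i • e i‖)
    (hlow : ∀ (zs : ℕ → X →L[ℝ] ℝ) (B : ℕ → Finset ℕ) (w : ℕ → ℝ),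
      (∀ j, zs j = ∑ i ∈ B j, w i • b i) → (∀ j, (B j).Nonempty) →
      (∀ j k : ℕ, j < k → ∀ s ∈ B j, ∀ t ∈ B k, s < t) → (∀ j, ‖zs j‖ = 1) →
      ∀ (n : ℕ) (a : Fin n → ℝ),
        (3 : ℝ) ^ (-(1 / q)) * (∑ j, |a j| ^ q) ^ (1 / q) ≤ ‖∑ j, a j • zs (j : ℕ)‖)
    (xs : ℕ → X →L[ℝ] ℝ) (A : ℕ → Finset ℕ) (co : ℕ → ℝ)
    (hxs : ∀ j, xs j = ∑ i ∈ A j, co i • b i)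
    (hAne : ∀ j, (A j).Nonempty)
    (hA : ∀ j k : ℕ, j < k → ∀ s ∈ A j, ∀ t ∈ A k, s < t)
    (hxn : ∀ j, ‖xs j‖ = 1)
    (hequiv : ∀ (n : ℕ) (a : Fin n → ℝ),
      C⁻¹ * (∑ j, |a j| ^ q) ^ (1 / q) ≤ ‖∑ j, a j • xs (j : ℕ)‖ ∧
      ‖∑ j, a j • xs (j : ℕ)‖ ≤ C * (∑ j, |a j| ^ q) ^ (1 / q)) :
    (∃ P : (X →L[ℝ] ℝ) →L[ℝ] (X →L[ℝ] ℝ),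
      P.comp P = P ∧ ‖P‖ ≤ (3 : ℝ) ^ (1 / q) * C ∧
      (∀ j, P (xs j) = xs j) ∧
      Set.range P ⊆ closure (Submodule.span ℝ (Set.range xs) : Set (X →L[ℝ] ℝ))) ∧
    ∃ T : lp (fun _ : ℕ => ℝ) (ENNReal.ofReal p) →L[ℝ] X, ∃ c > 0, ∀ f, c * ‖f‖ ≤ ‖T f‖ := by
  have hpq' : p.HolderConjugate q :=
    Real.holderConjugate_iff.mpr ⟨hp, by simpa only [one_div] using hpq⟩
  have hq : 0 < q := hpq'.symm.pos
  have hC0 : 0 < C := one_pos.trans_le hC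
  have hP := norm_coordProj_le hbio hdense huncond
  obtain ⟨y, hbiorth, hcoef⟩ :=
    exists_norming_vectors_of_blocks hbio hP (pairwise_disjoint_of_forall_lt hA) hxs hxn
  have hcoefq (f : X →L[ℝ] ℝ) (s : Finset ℕ) :
      (∑ j ∈ s, |f (y j)| ^ q) ^ (1 / q) ≤ 3 ^ (1 / q) * ‖f‖ :=
    (Real.rpow_le_rpow (by positivity) (sum_le_sum fun j _ =>
      Real.rpow_le_rpow (abs_nonneg _) (hcoef f j) hq.le) (by positivity)).trans
      (rpow_sum_norm_comp_coordProj_le hq hP hlow hAne hA hxs hxn f s)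
  have hxsupper := forall_finset_of_forall_fin
    (R := fun S v => ‖v‖ ≤ C * S ^ (1 / q)) hq.ne' fun n a => (hequiv n a).2
  refine ⟨exists_projection_of_rpow_estimates hq hC0.le (by positivity)
    (φ := fun j => ContinuousLinearMap.apply ℝ ℝ (y j)) (fun j k => by simp [hbiorth, eq_comm])
    hxsupper hcoefq, ?_⟩
  obtain ⟨T, hT⟩ := exists_lp_embedding (by positivity)
    (norm_sum_smul_le_of_dual hpq' (by positivity) hcoefq)
    (le_norm_sum_smul_of_biorthogonal hpq' hC0 hbiorth hxsupper)
  exact ⟨T, C⁻¹, inv_pos.mpr hC0, hT⟩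

/-- if in the dual `X^*` of a reflexive space `X` with a 1-unconditional basis
every normalized block basis of `(bⱼ) = (eⱼ^*)` satisfies the lower `ℓ_q` estimate with
constant `3^{-1/q}`, and some normalized block basis `(xsⱼ)` is `C`-equivalent to the unit
vector basis of `ℓ_q`, then the closed span of `(xsⱼ)` is complemented in `X^*` by a
projection of norm at most `3^{1/q} C`, and `X` contains an isomorphic copy of `ℓ_p`. -/
theorem stmt12 {X : Type*} [NormedAddCommGroup X] [NormedSpace ℝ X] [CompleteSpace X]
    (p q C : ℝ) (hp : 1 < p) (hpq : 1 / p + 1 / q = 1) (hC : 1 ≤ C)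
    [Fact (1 ≤ ENNReal.ofReal p)]
    (hrefl : Function.Surjective (NormedSpace.inclusionInDoubleDual ℝ X))
    (e : ℕ → X) (b : ℕ → X →L[ℝ] ℝ)
    (henorm : ∀ i, ‖e i‖ = 1)
    (hbio : ∀ i j, b i (e j) = if i = j then 1 else 0)
    (hdense : DenseRange fun a : ℕ →₀ ℝ => a.sum fun i c => c • e i)
    (huncond : ∀ (s : Finset ℕ) (a ε : ℕ → ℝ), (∀ n, ε n = 1 ∨ ε n = -1) →
      ‖∑ i ∈ s, (ε i * a i) • e i‖ = ‖∑ i ∈ s, a i • e i‖)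
    (hlow : ∀ (zs : ℕ → X →L[ℝ] ℝ) (B : ℕ → Finset ℕ) (w : ℕ → ℝ),
      (∀ j, zs j = ∑ i ∈ B j, w i • b i) → (∀ j, (B j).Nonempty) →
      (∀ j k : ℕ, j < k → ∀ s ∈ B j, ∀ t ∈ B k, s < t) → (∀ j, ‖zs j‖ = 1) →
      ∀ (n : ℕ) (a : Fin n → ℝ),
        (3 : ℝ) ^ (-(1 / q)) * (∑ j, |a j| ^ q) ^ (1 / q) ≤ ‖∑ j, a j • zs (j : ℕ)‖)
    (xs : ℕ → X →L[ℝ] ℝ) (A : ℕ → Finset ℕ) (co : ℕ → ℝ)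
    (hxs : ∀ j, xs j = ∑ i ∈ A j, co i • b i)
    (hAne : ∀ j, (A j).Nonempty)
    (hA : ∀ j k : ℕ, j < k → ∀ s ∈ A j, ∀ t ∈ A k, s < t)
    (hxn : ∀ j, ‖xs j‖ = 1)
    (hequiv : ∀ (n : ℕ) (a : Fin n → ℝ),
      C⁻¹ * (∑ j, |a j| ^ q) ^ (1 / q) ≤ ‖∑ j, a j • xs (j : ℕ)‖ ∧
      ‖∑ j, a j • xs (j : ℕ)‖ ≤ C * (∑ j, |a j| ^ q) ^ (1 / q)) :
    (∃ P : (X →L[ℝ] ℝ) →L[ℝ] (X →L[ℝ] ℝ),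
      P.comp P = P ∧ ‖P‖ ≤ (3 : ℝ) ^ (1 / q) * C ∧
      (∀ j, P (xs j) = xs j) ∧
      Set.range P ⊆ closure (Submodule.span ℝ (Set.range xs) : Set (X →L[ℝ] ℝ))) ∧
    ∃ T : lp (fun _ : ℕ => ℝ) (ENNReal.ofReal p) →L[ℝ] X, ∃ c > 0, ∀ f, c * ‖f‖ ≤ ‖T f‖ :=
  stmt12_general p q C hp hpq hC e b hbio hdense huncond hlow xs A co hxs hAne hA hxn hequiv
end

section
/- Let X* have a subsymmetric normalized block basic sequence (xⱼ*) of the dual basis (eⱼ*) such that ‖xⱼ*‖_∞ ≥ c > 0 for all j, where (eⱼ*) 1-dominates all its normalized block bases and (eⱼ*) is 1-unconditional. Then (xⱼ*) is equivalent to (eⱼ*): for all scalars, c‖∑aⱼeⱼ*‖ ≤ ‖∑aⱼxⱼ*‖ ≤ ‖∑aⱼeⱼ*‖. -/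
open Finset Function

noncomputable section

/-!
The upper estimate is the 1-domination of normalized block bases. For the lower one, pick in each
block `A j` a coordinate `k j` with `c ≤ |w (k j)|`. By 1-unconditionality every multiplier
`(tᵢ)` with `|tᵢ| ≤ 1` is a contraction on the span of `(bᵢ)`; the multiplier equal to
`c / wᵢ` at `i = k j` and to `0` elsewhere sends `∑ aⱼ xsⱼ` to `c ∑ aⱼ b (k j)`, whose norm is
`c ‖∑ aⱼ bⱼ‖` by subsymmetry.
-/

theorem Finset.pairwise_disjoint_of_lt_of_mem {ι α : Type*} [LinearOrder ι] [Preorder α]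
    {A : ι → Finset α} (hA : ∀ j k, j < k → ∀ s ∈ A j, ∀ t ∈ A k, s < t) :
    Pairwise (Disjoint on A) := fun _ _ hne =>
  Finset.disjoint_left.2 fun i hj hk => hne.lt_or_gt.elim
    (fun h => (hA _ _ h i hj i hk).false) (fun h => (hA _ _ h i hk i hj).false)

def IsOneUnconditional {V : Type*} [NormedAddCommGroup V] [NormedSpace ℝ V] (b : ℕ → V) :
    Prop :=
  ∀ (s : Finset ℕ) (a ε : ℕ → ℝ), (∀ n, ε n = 1 ∨ ε n = -1) →
    ‖∑ i ∈ s, (ε i * a i) • b i‖ = ‖∑ i ∈ s, a i • b i‖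

namespace IsOneUnconditional

variable {V : Type*} [NormedAddCommGroup V] [NormedSpace ℝ V] {b : ℕ → V}

/- Multiplying one coefficient by `t ∈ [-1, 1]` gives the convex combination
`(1 + t)/2 • x + (1 - t)/2 • y` of `x = ∑ fᵢ bᵢ` and of `y`, the same sum with the `j`-th sign
flipped, and `‖y‖ = ‖x‖`. -/
theorem norm_sum_update_le (hb : IsOneUnconditional b) (S : Finset ℕ) (f : ℕ → ℝ) (j : ℕ)
    {t : ℝ} (ht : |t| ≤ 1) :
    ‖∑ i ∈ S, Function.update f j (t * f j) i • b i‖ ≤ ‖∑ i ∈ S, f i • b i‖ := by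
  obtain ⟨ht₁, ht₂⟩ := abs_le.1 ht
  set ε : ℕ → ℝ := Function.update 1 j (-1)
  have hε : ∀ n, ε n = 1 ∨ ε n = -1 := fun n => by
    rcases eq_or_ne n j with rfl | h <;> simp [ε, *]
  have hconv : ∑ i ∈ S, Function.update f j (t * f j) i • b i =
      ((1 + t) / 2) • ∑ i ∈ S, f i • b i + ((1 - t) / 2) • ∑ i ∈ S, (ε i * f i) • b i := by
    simp only [smul_sum, ← sum_add_distrib, smul_smul, ← add_smul]
    refine sum_congr rfl fun i _ => congrArg (· • b i) ?_
    rcases eq_or_ne i j with rfl | h <;> simp [ε, *] <;> ring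
  calc ‖∑ i ∈ S, Function.update f j (t * f j) i • b i‖
      ≤ (1 + t) / 2 * ‖∑ i ∈ S, f i • b i‖ + (1 - t) / 2 * ‖∑ i ∈ S, (ε i * f i) • b i‖ := by
        rw [hconv]
        refine (norm_add_le _ _).trans_eq ?_
        rw [norm_smul, norm_smul, Real.norm_of_nonneg (by linarith),
          Real.norm_of_nonneg (by linarith)]
    _ = ‖∑ i ∈ S, f i • b i‖ := by rw [hb S f ε hε]; ring

theorem norm_sum_mul_smul_le (hb : IsOneUnconditional b) (S : Finset ℕ) (t f : ℕ → ℝ)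
    (ht : ∀ i ∈ S, |t i| ≤ 1) :
    ‖∑ i ∈ S, (t i * f i) • b i‖ ≤ ‖∑ i ∈ S, f i • b i‖ := by
  suffices h : ∀ T ⊆ S,
      ‖∑ i ∈ S, (if i ∈ T then t i * f i else f i) • b i‖ ≤ ‖∑ i ∈ S, f i • b i‖ by
    refine (le_of_eq ?_).trans (h S subset_rfl)
    exact congrArg norm (sum_congr rfl fun i hi => by rw [if_pos hi])
  intro T
  induction T using Finset.induction_on with
  | empty => simp
  | @insert j T hj ih =>
    intro hTS
    have hupdate : ∀ i, (if i ∈ insert j T then t i * f i else f i) =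
        Function.update (fun i => if i ∈ T then t i * f i else f i) j
          (t j * if j ∈ T then t j * f j else f j) i := fun i => by
      rcases eq_or_ne i j with rfl | h <;> simp [*]
    simp only [hupdate]
    exact (hb.norm_sum_update_le S _ j (ht j (hTS (mem_insert_self j T)))).trans
      (ih ((subset_insert j T).trans hTS))

theorem norm_sum_smul_le_norm_sum_blocks (hb : IsOneUnconditional b) {ι : Type*}
    (s : Finset ι) (A : ι → Finset ℕ) (hA : (s : Set ι).PairwiseDisjoint A) (w : ℕ → ℝ)
    (k : ι → ℕ) (hkA : ∀ j ∈ s, k j ∈ A j) {c : ℝ} (hc : 0 < c)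
    (hkw : ∀ j ∈ s, c ≤ |w (k j)|) (a : ι → ℝ) :
    ‖∑ j ∈ s, (c * a j) • b (k j)‖ ≤ ‖∑ j ∈ s, a j • ∑ i ∈ A j, w i • b i‖ := by
  classical
  set f : ℕ → ℝ := fun i => ∑ j ∈ s, if i ∈ A j then a j * w i else 0
  have hf : ∀ j ∈ s, ∀ i ∈ A j, f i = a j * w i := fun j hj i hi => by
    refine (sum_eq_single_of_mem j hj fun j' hj' hne => ?_).trans (if_pos hi)
    exact if_neg fun hi' => hne (hA.elim_finset hj' hj i hi' hi)
  have hblocks : ∑ j ∈ s, a j • ∑ i ∈ A j, w i • b i = ∑ i ∈ s.biUnion A, f i • b i := by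
    rw [sum_biUnion hA]
    refine sum_congr rfl fun j hj => ?_
    rw [smul_sum]
    exact sum_congr rfl fun i hi => by rw [hf j hj i hi, smul_smul]
  set T := s.image k
  have hTS : T ⊆ s.biUnion A := image_subset_iff.2 fun j hj => mem_biUnion.2 ⟨j, hj, hkA j hj⟩
  set t : ℕ → ℝ := fun i => if i ∈ T then c / w i else 0
  have ht : ∀ i ∈ s.biUnion A, |t i| ≤ 1 := fun i _ => by
    by_cases hi : i ∈ T
    · obtain ⟨j, hj, rfl⟩ := mem_image.1 hi
      simp only [t, if_pos hi, abs_div, abs_of_pos hc]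
      exact div_le_one_of_le₀ (hkw j hj) (abs_nonneg _)
    · simp [t, hi]
  have hchosen : ∑ i ∈ s.biUnion A, (t i * f i) • b i = ∑ j ∈ s, (c * a j) • b (k j) := by
    simp only [t, ite_mul, zero_mul, ite_smul, zero_smul, sum_ite_mem,
      inter_eq_right.2 hTS]
    rw [sum_image fun j hj j' hj' h =>
      hA.elim_finset hj hj' _ (hkA j hj) (by rw [h]; exact hkA j' hj')]
    refine sum_congr rfl fun j hj => ?_
    have hw : w (k j) ≠ 0 := abs_pos.1 (hc.trans_le (hkw j hj))
    rw [hf j hj _ (hkA j hj)]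
    field_simp
  rw [hblocks, ← hchosen]
  exact hb.norm_sum_mul_smul_le _ t f ht

end IsOneUnconditional

theorem stmt13_general {V : Type*} [NormedAddCommGroup V] [NormedSpace ℝ V]
    (c : ℝ) (hc : 0 < c)
    (b : ℕ → V)
    (huncond : ∀ (s : Finset ℕ) (a ε : ℕ → ℝ), (∀ n, ε n = 1 ∨ ε n = -1) →
      ‖∑ i ∈ s, (ε i * a i) • b i‖ = ‖∑ i ∈ s, a i • b i‖)
    (hbsubsym : ∀ π : ℕ → ℕ, StrictMono π → ∀ (n : ℕ) (a : Fin n → ℝ),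
      ‖∑ j, a j • b (π j)‖ = ‖∑ j, a j • b (j : ℕ)‖)
    (hdom : ∀ (z : ℕ → V) (B : ℕ → Finset ℕ) (w : ℕ → ℝ),
      (∀ j, z j = ∑ i ∈ B j, w i • b i) → (∀ j, (B j).Nonempty) →
      (∀ j k : ℕ, j < k → ∀ s ∈ B j, ∀ t ∈ B k, s < t) → (∀ j, ‖z j‖ = 1) →
      ∀ (n : ℕ) (a : Fin n → ℝ), ‖∑ j, a j • z (j : ℕ)‖ ≤ ‖∑ j, a j • b (j : ℕ)‖)
    (xs : ℕ → V) (A : ℕ → Finset ℕ) (w : ℕ → ℝ)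
    (hxs : ∀ j, xs j = ∑ i ∈ A j, w i • b i)
    (hAne : ∀ j, (A j).Nonempty)
    (hA : ∀ j k : ℕ, j < k → ∀ s ∈ A j, ∀ t ∈ A k, s < t)
    (hxn : ∀ j, ‖xs j‖ = 1)
    (hbig : ∀ j, ∃ k ∈ A j, c ≤ |w k|) :
    ∀ (n : ℕ) (a : Fin n → ℝ),
      c * ‖∑ j, a j • b (j : ℕ)‖ ≤ ‖∑ j, a j • xs (j : ℕ)‖ ∧
      ‖∑ j, a j • xs (j : ℕ)‖ ≤ ‖∑ j, a j • b (j : ℕ)‖ := by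
  intro n a
  refine ⟨?_, hdom xs A w hxs hAne hA hxn n a⟩
  choose k hkA hkw using hbig
  have hk : StrictMono k := fun j j' h => hA j j' h _ (hkA j) _ (hkA j')
  have hdisj : ((univ : Finset (Fin n)) : Set (Fin n)).PairwiseDisjoint fun j => A j :=
    ((Finset.pairwise_disjoint_of_lt_of_mem hA).comp_of_injective Fin.val_injective).set_pairwise _
  calc c * ‖∑ j : Fin n, a j • b j‖ = ‖c • ∑ j : Fin n, a j • b (k j)‖ := by
        rw [norm_smul, Real.norm_of_nonneg hc.le, hbsubsym k hk]
    _ = ‖∑ j : Fin n, (c * a j) • b (k j)‖ := by simp only [smul_sum, smul_smul]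
    _ ≤ ‖∑ j : Fin n, a j • ∑ i ∈ A j, w i • b i‖ :=
        IsOneUnconditional.norm_sum_smul_le_norm_sum_blocks huncond univ _ hdisj w _
          (fun j _ => hkA j) hc (fun j _ => hkw j) a
    _ = ‖∑ j : Fin n, a j • xs j‖ := by simp only [hxs]

/-- if `(b)` is a 1-unconditional, 1-subsymmetric normalized basis (of a dual
space) which 1-dominates all of its normalized block bases, and `(xs)` is a subsymmetric
normalized block basic sequence of `(b)` all of whose members have a coefficient of absolute
value at least `c > 0`, then `(xs)` is equivalent to `(b)`:
`c‖∑ aⱼbⱼ‖ ≤ ‖∑ aⱼxsⱼ‖ ≤ ‖∑ aⱼbⱼ‖`. -/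
theorem stmt13 {V : Type*} [NormedAddCommGroup V] [NormedSpace ℝ V]
    (c : ℝ) (hc : 0 < c)
    (b : ℕ → V) (hbnorm : ∀ i, ‖b i‖ = 1)
    (huncond : ∀ (s : Finset ℕ) (a ε : ℕ → ℝ), (∀ n, ε n = 1 ∨ ε n = -1) →
      ‖∑ i ∈ s, (ε i * a i) • b i‖ = ‖∑ i ∈ s, a i • b i‖)
    (hbsubsym : ∀ π : ℕ → ℕ, StrictMono π → ∀ (n : ℕ) (a : Fin n → ℝ),
      ‖∑ j, a j • b (π j)‖ = ‖∑ j, a j • b (j : ℕ)‖)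
    (hdom : ∀ (z : ℕ → V) (B : ℕ → Finset ℕ) (w : ℕ → ℝ),
      (∀ j, z j = ∑ i ∈ B j, w i • b i) → (∀ j, (B j).Nonempty) →
      (∀ j k : ℕ, j < k → ∀ s ∈ B j, ∀ t ∈ B k, s < t) → (∀ j, ‖z j‖ = 1) →
      ∀ (n : ℕ) (a : Fin n → ℝ), ‖∑ j, a j • z (j : ℕ)‖ ≤ ‖∑ j, a j • b (j : ℕ)‖)
    (xs : ℕ → V) (A : ℕ → Finset ℕ) (w : ℕ → ℝ)
    (hxs : ∀ j, xs j = ∑ i ∈ A j, w i • b i)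
    (hAne : ∀ j, (A j).Nonempty)
    (hA : ∀ j k : ℕ, j < k → ∀ s ∈ A j, ∀ t ∈ A k, s < t)
    (hxn : ∀ j, ‖xs j‖ = 1)
    (hxsubsym : ∃ D : ℝ, 1 ≤ D ∧ ∀ π : ℕ → ℕ, StrictMono π → ∀ (n : ℕ) (a : Fin n → ℝ),
      D⁻¹ * ‖∑ j, a j • xs (j : ℕ)‖ ≤ ‖∑ j, a j • xs (π j)‖ ∧
      ‖∑ j, a j • xs (π j)‖ ≤ D * ‖∑ j, a j • xs (j : ℕ)‖)
    (hbig : ∀ j, ∃ k ∈ A j, c ≤ |w k|) :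
    ∀ (n : ℕ) (a : Fin n → ℝ),
      c * ‖∑ j, a j • b (j : ℕ)‖ ≤ ‖∑ j, a j • xs (j : ℕ)‖ ∧
      ‖∑ j, a j • xs (j : ℕ)‖ ≤ ‖∑ j, a j • b (j : ℕ)‖ :=
  stmt13_general c hc b huncond hbsubsym hdom xs A w hxs hAne hA hxn hbig
end
end
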